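/- arXiv:2404.12234 — 4 statements merged into one kernel-verified Lean document; each statement's English description precedes it below -/
import Mathlib

section
/- Let ρ ∈ (0,1) and let P_ρ be the Bernoulli(ρ) product measure on configurations η ∈ {0,1}^{Z^d}. For any square-integrable function f and any two sites x, y, the L²(P_ρ)-norms of the Glauber derivatives satisfy ‖π_x f‖_{L²} ≤ ‖π_y f‖_{L²} + (1/√(2ρ(1-ρ))) ‖π_{x,y} f‖_{L²}, where π_x f(η) = f(η^x) − f(η) is the Glauber (spin-flip at x) derivative and π_{x,y} f(η) = f(η^{x,y}) − f(η) is the Kawasaki (exchange of values at x and y) derivative. -/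
open MeasureTheory

/-- `μ` is the Bernoulli(ρ) product measure on `{0,1}^{ℤᵈ}`, characterized by its
cylinder probabilities. -/
def IsBernoulliProduct {d : ℕ} (ρ : ℝ) (μ : Measure ((Fin d → ℤ) → Bool)) : Prop :=
  IsProbabilityMeasure μ ∧
    ∀ (s : Finset (Fin d → ℤ)) (b : (Fin d → ℤ) → Bool),
      μ {η | ∀ x ∈ s, η x = b x} = ∏ x ∈ s, ENNReal.ofReal (if b x then ρ else 1 - ρ)

/-- The Glauber derivative `π_x f (η) = f(η^x) - f(η)`, where `η^x` flips the value at `x`. -/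
def glauberDeriv {d : ℕ} (x : Fin d → ℤ) (f : ((Fin d → ℤ) → Bool) → ℝ) :
    ((Fin d → ℤ) → Bool) → ℝ :=
  fun η => f (Function.update η x (!η x)) - f η

/-- The exchange `η^{x,y}`: swap the values of `η` at `x` and `y`. -/
def exchange {d : ℕ} (x y : Fin d → ℤ) (η : (Fin d → ℤ) → Bool) : (Fin d → ℤ) → Bool :=
  fun z => if z = x then η y else if z = y then η x else η z

/-- The Kawasaki derivative `π_{x,y} f (η) = f(η^{x,y}) - f(η)`. -/
def kawasakiDeriv {d : ℕ} (x y : Fin d → ℤ) (f : ((Fin d → ℤ) → Bool) → ℝ) :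
    ((Fin d → ℤ) → Bool) → ℝ :=
  fun η => f (exchange x y η) - f η

open scoped ENNReal

/-! If `η x = η y` then `η^x = (η^y)^{x,y}`, otherwise `η^x = (η^{x,y})^y`. Hence
`π_x f (η) = π_y f (T η) + π_{x,y} f (S η)`, where `T = glauberBase x y` exchanges `x, y` off
the diagonal `{η x = η y}` and `S = kawasakiBase x y` flips `y` on it. Since the exchange
preserves `P_ρ` and the diagonal, so does `T`. The flip at `y` has density `P_ρ(!η y) / P_ρ(η y)`, so
`E[g ∘ S] = E[g / P_ρ(η y); η x ≠ η y]`; for an exchange-invariant `g ≥ 0`, averaging with the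
exchanged integrand replaces `1 / P_ρ(η y)` by `(1/ρ + 1/(1-ρ)) / 2 = 1 / (2χ(ρ))`. Applied to
`g = |π_{x,y} f|²` this bounds `‖π_{x,y} f ∘ S‖₂`, and the triangle inequality concludes. -/

section Cylinder

variable {ι : Type*}

def cylSet (s : Finset ι) (b : ι → Bool) : Set (ι → Bool) := {η | ∀ x ∈ s, η x = b x}

lemma measurableSet_cylSet (s : Finset ι) (b : ι → Bool) : MeasurableSet (cylSet s b) :=
  MeasurableSet.pi s.countable_toSet fun _ _ => measurableSet_singleton _

lemma exists_cylSet_eq_cylinder_singleton (s : Finset ι) (b : ∀ _ : s, Bool) :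
    ∃ b' : ι → Bool, cylinder (α := fun _ : ι => Bool) s {b} = cylSet s b' := by
  classical
  refine ⟨fun x => if h : x ∈ s then b ⟨x, h⟩ else false, ?_⟩
  ext η
  simp only [cylinder, cylSet, Set.mem_preimage, Set.mem_singleton_iff, funext_iff,
    Finset.restrict, Subtype.forall, Set.mem_ofPred_eq]
  exact forall₂_congr fun x hx => by simp [hx]

theorem MeasureTheory.Measure.ext_of_cylSet {μ ν : Measure (ι → Bool)} [IsFiniteMeasure μ]
    (h : ∀ s b, μ (cylSet s b) = ν (cylSet s b)) : μ = ν := by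
  refine ext_of_generate_finite _ generateFrom_measurableCylinders.symm
    isPiSystem_measurableCylinders ?_ (by simpa [cylSet] using h ∅ fun _ => false)
  intro t ht
  obtain ⟨s, T, -, rfl⟩ := (mem_measurableCylinders t).1 ht
  set C : (s → Bool) → Set (ι → Bool) := fun b => cylinder s {b}
  have hT : cylinder s T = ⋃ b ∈ T.toFinite.toFinset, C b := by
    ext η; simp [C, cylinder]
  have hdisj : Set.PairwiseDisjoint ↑T.toFinite.toFinset C :=
    fun b _ b' _ hne => Set.disjoint_left.2 fun η h1 h2 => hne (h1.symm.trans h2)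
  have hmeas : ∀ b ∈ T.toFinite.toFinset, MeasurableSet (C b) := fun b _ =>
    (measurableSet_singleton b).cylinder
  rw [hT, measure_biUnion_finset hdisj hmeas, measure_biUnion_finset hdisj hmeas]
  refine Finset.sum_congr rfl fun b _ => ?_
  obtain ⟨b', hb'⟩ := exists_cylSet_eq_cylinder_singleton s b
  rw [show C b = cylSet s b' from hb', h]

lemma measurableSet_apply_eq_apply (x y : ι) : MeasurableSet {η : ι → Bool | η x = η y} :=
  measurableSet_eq_fun (measurable_pi_apply x) (measurable_pi_apply y)

variable [DecidableEq ι]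

lemma cylSet_eq_union_insert {s : Finset ι} {y : ι} (hy : y ∉ s) (b : ι → Bool) :
    cylSet s b = cylSet (insert y s) (Function.update b y true) ∪
      cylSet (insert y s) (Function.update b y false) := by
  ext η
  simp only [cylSet, Set.mem_union, Set.mem_ofPred_eq, Finset.forall_mem_insert,
    Function.update_self]
  have hupd : ∀ c, (∀ x ∈ s, η x = Function.update b y c x) ↔ ∀ x ∈ s, η x = b x :=
    fun c => forall₂_congr fun x hx => by rw [Function.update_of_ne (ne_of_mem_of_not_mem hx hy)]
  rw [hupd, hupd]
  cases η y <;> simp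

theorem MeasureTheory.Measure.ext_of_cylSet_of_mem {μ ν : Measure (ι → Bool)} [IsFiniteMeasure μ]
    (y : ι) (h : ∀ s b, y ∈ s → μ (cylSet s b) = ν (cylSet s b)) : μ = ν := by
  refine Measure.ext_of_cylSet fun s b => ?_
  by_cases hy : y ∈ s
  · exact h s b hy
  have hdisj : Disjoint (cylSet (insert y s) (Function.update b y true))
      (cylSet (insert y s) (Function.update b y false)) :=
    Set.disjoint_left.2 fun η h1 h2 => by
      simpa using (h1 y (s.mem_insert_self y)).symm.trans (h2 y (s.mem_insert_self y))
  rw [cylSet_eq_union_insert hy, measure_union hdisj (measurableSet_cylSet _ _),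
    measure_union hdisj (measurableSet_cylSet _ _), h _ _ (s.mem_insert_self y),
    h _ _ (s.mem_insert_self y)]

end Cylinder

section Flip

variable {ι : Type*} [DecidableEq ι]

def flipAt (y : ι) (η : ι → Bool) : ι → Bool := Function.update η y (!η y)

lemma flipAt_apply (y : ι) (η : ι → Bool) (z : ι) :
    flipAt y η z = if z = y then !η y else η z := by
  simp [flipAt, Function.update_apply]

lemma measurable_flipAt (y : ι) : Measurable (flipAt (ι := ι) y) := by
  unfold flipAt
  fun_prop

lemma preimage_flipAt_cylSet (y : ι) (s : Finset ι) (b : ι → Bool) :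
    flipAt y ⁻¹' cylSet s b = cylSet s (flipAt y b) := by
  ext η
  refine forall₂_congr fun z _ => ?_
  simp only [flipAt_apply]
  split_ifs with hz
  · subst hz; cases η z <;> cases b z <;> simp
  · rfl

end Flip

def bernoulliMass (ρ : ℝ) (c : Bool) : ℝ := if c then ρ else 1 - ρ

section BernoulliMass

variable {ρ : ℝ}

lemma bernoulliMass_pos (hρ : ρ ∈ Set.Ioo (0 : ℝ) 1) (c : Bool) : 0 < bernoulliMass ρ c := by
  cases c <;> simp [bernoulliMass, hρ.1, hρ.2]

lemma bernoulliMass_not_add (ρ : ℝ) (c : Bool) :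
    bernoulliMass ρ (!c) + bernoulliMass ρ c = 1 := by
  cases c <;> simp [bernoulliMass]

lemma inv_bernoulliMass_add_inv_bernoulliMass_not (hρ : ρ ∈ Set.Ioo (0 : ℝ) 1) (c : Bool) :
    (bernoulliMass ρ c)⁻¹ + (bernoulliMass ρ (!c))⁻¹ = (ρ * (1 - ρ))⁻¹ := by
  have h0 : ρ ≠ 0 := hρ.1.ne'
  have h1 : 1 - ρ ≠ 0 := sub_ne_zero.2 hρ.2.ne'
  cases c <;> simp only [bernoulliMass, Bool.not_true, Bool.not_false, Bool.false_eq_true,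
    if_true, if_false] <;> field_simp <;> ring

variable {ι : Type*}

noncomputable def flipDensity (ρ : ℝ) (y : ι) (η : ι → Bool) : ℝ≥0∞ :=
  ENNReal.ofReal (bernoulliMass ρ (!η y) / bernoulliMass ρ (η y))

lemma flipDensity_add_one (hρ : ρ ∈ Set.Ioo (0 : ℝ) 1) (y : ι) (η : ι → Bool) :
    flipDensity ρ y η + 1 = ENNReal.ofReal (bernoulliMass ρ (η y))⁻¹ := by
  have hpos := bernoulliMass_pos hρ (η y)
  rw [flipDensity, ← ENNReal.ofReal_one,
    ← ENNReal.ofReal_add (div_pos (bernoulliMass_pos hρ _) hpos).le zero_le_one,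
    div_add_one hpos.ne', bernoulliMass_not_add, one_div]

lemma measurable_flipDensity (ρ : ℝ) (y : ι) : Measurable (flipDensity ρ y) :=
  (Measurable.of_discrete (f := fun c : Bool =>
    ENNReal.ofReal (bernoulliMass ρ (!c) / bernoulliMass ρ c))).comp (measurable_pi_apply y)

end BernoulliMass

lemma MeasureTheory.MeasurePreserving.ite_id {α : Type*} [MeasurableSpace α] {μ : Measure α}
    {φ : α → α} (hφ : MeasurePreserving φ μ μ) {p : α → Prop} [DecidablePred p]
    (hp : MeasurableSet {a | p a}) (hφp : ∀ a, p (φ a) ↔ p a) :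
    MeasurePreserving (fun a => if p a then a else φ a) μ μ := by
  have hm : Measurable fun a => if p a then a else φ a := measurable_id.ite hp hφ.measurable
  refine ⟨hm, Measure.ext fun C hC => ?_⟩
  have hin : (fun a => if p a then a else φ a) ⁻¹' C ∩ {a | p a} = C ∩ {a | p a} := by
    ext a; by_cases ha : p a <;> simp [ha]
  have hdiff : (fun a => if p a then a else φ a) ⁻¹' C \ {a | p a} = φ ⁻¹' (C \ {a | p a}) := by
    ext a; by_cases ha : p a <;> simp [ha, hφp]
  rw [Measure.map_apply hm hC, ← measure_inter_add_sdiff _ hp, hin, hdiff,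
    hφ.measure_preimage (hC.diff hp).nullMeasurableSet, measure_inter_add_sdiff _ hp]

lemma eLpNorm_two_le_of_lintegral_le {α E F : Type*} [MeasurableSpace α] {μ : Measure α}
    [NormedAddCommGroup E] [NormedAddCommGroup F] {f : α → E} {g : α → F} {c : ℝ≥0∞}
    (h : ∫⁻ a, ‖f a‖ₑ ^ 2 ∂μ ≤ c ^ 2 * ∫⁻ a, ‖g a‖ₑ ^ 2 ∂μ) :
    eLpNorm f 2 μ ≤ c * eLpNorm g 2 μ := by
  have hf2 : eLpNorm f 2 μ ^ 2 = ∫⁻ a, ‖f a‖ₑ ^ 2 ∂μ := by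
    simpa using eLpNorm_nnreal_pow_eq_lintegral (f := f) (μ := μ) (p := 2) two_ne_zero
  have hg2 : eLpNorm g 2 μ ^ 2 = ∫⁻ a, ‖g a‖ₑ ^ 2 ∂μ := by
    simpa using eLpNorm_nnreal_pow_eq_lintegral (f := g) (μ := μ) (p := 2) two_ne_zero
  rwa [← ENNReal.pow_le_pow_left_iff two_ne_zero, mul_pow, hf2, hg2]

section Decomposition

variable {d : ℕ}

lemma exchange_eq_comp_swap (x y : Fin d → ℤ) :
    exchange x y = fun η => η ∘ Equiv.swap x y := by
  ext η z
  rw [Function.comp_apply, Equiv.swap_apply_def]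
  unfold exchange
  split_ifs <;> rfl

lemma measurable_exchange (x y : Fin d → ℤ) : Measurable (exchange x y) := by
  rw [exchange_eq_comp_swap]
  exact measurable_pi_lambda _ fun z => measurable_pi_apply _

lemma exchange_exchange (x y : Fin d → ℤ) (η : (Fin d → ℤ) → Bool) :
    exchange x y (exchange x y η) = η := by
  ext z
  simp [exchange_eq_comp_swap]

lemma exchange_apply_eq_iff (x y : Fin d → ℤ) (η : (Fin d → ℤ) → Bool) :
    exchange x y η x = exchange x y η y ↔ η x = η y := by
  simp only [exchange_eq_comp_swap, Function.comp_apply, Equiv.swap_apply_left,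
    Equiv.swap_apply_right, eq_comm]

lemma exchange_flipAt_of_eq {x y : Fin d → ℤ} {η : (Fin d → ℤ) → Bool} (h : η x = η y) :
    exchange x y (flipAt y η) = flipAt x η := by
  ext z
  simp only [exchange, flipAt_apply]
  split_ifs <;> simp_all

lemma flipAt_exchange_of_ne {x y : Fin d → ℤ} {η : (Fin d → ℤ) → Bool} (h : η x ≠ η y) :
    flipAt y (exchange x y η) = flipAt x η := by
  ext z
  simp only [exchange, flipAt_apply]
  split_ifs <;> cases hx : η x <;> cases hy : η y <;> grind

lemma glauberDeriv_apply (z : Fin d → ℤ) (f : ((Fin d → ℤ) → Bool) → ℝ)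
    (η : (Fin d → ℤ) → Bool) : glauberDeriv z f η = f (flipAt z η) - f η :=
  rfl

lemma kawasakiDeriv_exchange (f : ((Fin d → ℤ) → Bool) → ℝ) (x y : Fin d → ℤ)
    (η : (Fin d → ℤ) → Bool) :
    kawasakiDeriv x y f (exchange x y η) = -kawasakiDeriv x y f η := by
  simp only [kawasakiDeriv, exchange_exchange, neg_sub]

lemma measurable_glauberDeriv {f : ((Fin d → ℤ) → Bool) → ℝ} (hf : Measurable f)
    (z : Fin d → ℤ) : Measurable (glauberDeriv z f) :=
  (hf.comp (measurable_flipAt z)).sub hf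

lemma measurable_kawasakiDeriv {f : ((Fin d → ℤ) → Bool) → ℝ} (hf : Measurable f)
    (x y : Fin d → ℤ) : Measurable (kawasakiDeriv x y f) :=
  (hf.comp (measurable_exchange x y)).sub hf

def glauberBase (x y : Fin d → ℤ) (η : (Fin d → ℤ) → Bool) : (Fin d → ℤ) → Bool :=
  if η x = η y then η else exchange x y η

def kawasakiBase (x y : Fin d → ℤ) (η : (Fin d → ℤ) → Bool) : (Fin d → ℤ) → Bool :=
  if η x = η y then flipAt y η else η

lemma measurable_kawasakiBase (x y : Fin d → ℤ) : Measurable (kawasakiBase x y) :=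
  (measurable_flipAt y).ite (measurableSet_apply_eq_apply x y) measurable_id

lemma glauberDeriv_eq_add (f : ((Fin d → ℤ) → Bool) → ℝ) (x y : Fin d → ℤ)
    (η : (Fin d → ℤ) → Bool) :
    glauberDeriv x f η =
      glauberDeriv y f (glauberBase x y η) + kawasakiDeriv x y f (kawasakiBase x y η) := by
  by_cases h : η x = η y
  · simp only [glauberBase, kawasakiBase, if_pos h, glauberDeriv_apply, kawasakiDeriv,
      exchange_flipAt_of_eq h]
    ring
  · simp only [glauberBase, kawasakiBase, if_neg h, glauberDeriv_apply, kawasakiDeriv,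
      flipAt_exchange_of_ne h]
    ring

end Decomposition

namespace IsBernoulliProduct

variable {d : ℕ} {ρ : ℝ} {μ : Measure ((Fin d → ℤ) → Bool)}

lemma measure_cylSet (hμ : IsBernoulliProduct ρ μ) (s : Finset (Fin d → ℤ))
    (b : (Fin d → ℤ) → Bool) :
    μ (cylSet s b) = ∏ x ∈ s, ENNReal.ofReal (bernoulliMass ρ (b x)) :=
  hμ.2 s b

lemma measurePreserving_comp_perm (hμ : IsBernoulliProduct ρ μ) (σ : Equiv.Perm (Fin d → ℤ)) :
    MeasurePreserving (fun η => η ∘ σ) μ μ := by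
  have := hμ.1
  have hσ : Measurable fun η : (Fin d → ℤ) → Bool => η ∘ σ :=
    measurable_pi_lambda _ fun x => measurable_pi_apply (σ x)
  refine ⟨hσ, Measure.ext_of_cylSet fun s b => ?_⟩
  have hpre : (fun η => η ∘ σ) ⁻¹' cylSet s b = cylSet (s.map σ.toEmbedding) (b ∘ σ.symm) := by
    ext η
    simp only [cylSet, Set.mem_preimage, Set.mem_ofPred_eq, Finset.forall_mem_map,
      Function.comp_apply]
    simp
  rw [Measure.map_apply hσ (measurableSet_cylSet s b), hpre, hμ.measure_cylSet,
    hμ.measure_cylSet, Finset.prod_map]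
  simp

lemma map_flipAt (hρ : ρ ∈ Set.Ioo (0 : ℝ) 1) (hμ : IsBernoulliProduct ρ μ) (y : Fin d → ℤ) :
    μ.map (flipAt y) = μ.withDensity (flipDensity ρ y) := by
  have := hμ.1
  refine Measure.ext_of_cylSet_of_mem y fun s b hy => ?_
  have hcyl := measurableSet_cylSet s b
  have hconst : ∀ η ∈ cylSet s b, flipDensity ρ y η = flipDensity ρ y b := fun η hη => by
    rw [flipDensity, flipDensity, hη y hy]
  rw [Measure.map_apply (measurable_flipAt y) hcyl, preimage_flipAt_cylSet,
    withDensity_apply _ hcyl, setLIntegral_congr_fun hcyl hconst, setLIntegral_const,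
    hμ.measure_cylSet, hμ.measure_cylSet, ← Finset.mul_prod_erase s _ hy,
    ← Finset.mul_prod_erase s _ hy, ← mul_assoc, flipDensity,
    ← ENNReal.ofReal_mul (div_pos (bernoulliMass_pos hρ _) (bernoulliMass_pos hρ _)).le,
    div_mul_cancel₀ _ (bernoulliMass_pos hρ _).ne']
  congr 1
  · simp [flipAt_apply]
  · refine Finset.prod_congr rfl fun z hz => ?_
    rw [flipAt_apply, if_neg (Finset.ne_of_mem_erase hz)]

lemma quasiMeasurePreserving_flipAt (hρ : ρ ∈ Set.Ioo (0 : ℝ) 1) (hμ : IsBernoulliProduct ρ μ)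
    (y : Fin d → ℤ) : Measure.QuasiMeasurePreserving (flipAt y) μ μ :=
  ⟨measurable_flipAt y, by rw [hμ.map_flipAt hρ y]; exact withDensity_absolutelyContinuous _ _⟩

lemma measurePreserving_exchange (hμ : IsBernoulliProduct ρ μ)
    (x y : Fin d → ℤ) : MeasurePreserving (exchange x y) μ μ := by
  rw [exchange_eq_comp_swap]
  exact hμ.measurePreserving_comp_perm (Equiv.swap x y)

lemma measurePreserving_glauberBase (hμ : IsBernoulliProduct ρ μ)
    (x y : Fin d → ℤ) : MeasurePreserving (glauberBase x y) μ μ :=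
  (hμ.measurePreserving_exchange x y).ite_id (measurableSet_apply_eq_apply x y)
    (exchange_apply_eq_iff x y)

lemma glauberDeriv_ae_eq (hρ : ρ ∈ Set.Ioo (0 : ℝ) 1)
    (hμ : IsBernoulliProduct ρ μ) {f g : ((Fin d → ℤ) → Bool) → ℝ} (hfg : f =ᵐ[μ] g)
    (z : Fin d → ℤ) : glauberDeriv z f =ᵐ[μ] glauberDeriv z g :=
  ((hμ.quasiMeasurePreserving_flipAt hρ z).ae_eq_comp hfg).sub hfg

lemma kawasakiDeriv_ae_eq (hμ : IsBernoulliProduct ρ μ)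
    {f g : ((Fin d → ℤ) → Bool) → ℝ} (hfg : f =ᵐ[μ] g) (x y : Fin d → ℤ) :
    kawasakiDeriv x y f =ᵐ[μ] kawasakiDeriv x y g :=
  ((hμ.measurePreserving_exchange x y).quasiMeasurePreserving.ae_eq_comp hfg).sub hfg

lemma lintegral_comp_kawasakiBase (hρ : ρ ∈ Set.Ioo (0 : ℝ) 1)
    (hμ : IsBernoulliProduct ρ μ) {x y : Fin d → ℤ} (hxy : x ≠ y)
    {G : ((Fin d → ℤ) → Bool) → ℝ≥0∞} (hG : Measurable G) :
    ∫⁻ η, G (kawasakiBase x y η) ∂μ =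
      ∫⁻ η in {η | η x = η y}ᶜ, ENNReal.ofReal (bernoulliMass ρ (η y))⁻¹ * G η ∂μ := by
  set E := {η : (Fin d → ℤ) → Bool | η x = η y}
  have hE : MeasurableSet E := measurableSet_apply_eq_apply x y
  have hflipE : flipAt y ⁻¹' Eᶜ = E := by
    ext η
    cases hx : η x <;> cases hy : η y <;> simp [E, flipAt_apply, hxy, hx, hy]
  have hon : ∫⁻ η in E, G (kawasakiBase x y η) ∂μ =
      ∫⁻ η in Eᶜ, flipDensity ρ y η * G η ∂μ :=
    calc ∫⁻ η in E, G (kawasakiBase x y η) ∂μ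
        = ∫⁻ η in flipAt y ⁻¹' Eᶜ, G (flipAt y η) ∂μ := by
          rw [hflipE]
          exact setLIntegral_congr_fun hE fun η hη => congrArg G (if_pos hη)
      _ = ∫⁻ η in Eᶜ, G η ∂(μ.map (flipAt y)) :=
          (setLIntegral_map hE.compl hG (measurable_flipAt y)).symm
      _ = ∫⁻ η in Eᶜ, flipDensity ρ y η * G η ∂μ := by
          rw [hμ.map_flipAt hρ, setLIntegral_withDensity_eq_setLIntegral_mul _
            (measurable_flipDensity ρ y) hG hE.compl]
          rfl
  have hoff : ∫⁻ η in Eᶜ, G (kawasakiBase x y η) ∂μ = ∫⁻ η in Eᶜ, G η ∂μ :=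
    setLIntegral_congr_fun hE.compl fun η hη => congrArg G (if_neg hη)
  rw [← lintegral_add_compl _ hE, hon, hoff,
    ← lintegral_add_left (f := fun η => flipDensity ρ y η * G η)
      ((measurable_flipDensity ρ y).mul hG)]
  refine setLIntegral_congr_fun hE.compl fun η _ => ?_
  rw [← flipDensity_add_one hρ, add_mul, one_mul]

lemma two_mul_setLIntegral_inv_bernoulliMass_mul (hρ : ρ ∈ Set.Ioo (0 : ℝ) 1)
    (hμ : IsBernoulliProduct ρ μ) (x y : Fin d → ℤ) {G : ((Fin d → ℤ) → Bool) → ℝ≥0∞}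
    (hG : Measurable G) (hG_exchange : ∀ η, G (exchange x y η) = G η) :
    2 * ∫⁻ η in {η | η x = η y}ᶜ, ENNReal.ofReal (bernoulliMass ρ (η y))⁻¹ * G η ∂μ =
      ENNReal.ofReal (ρ * (1 - ρ))⁻¹ * ∫⁻ η in {η | η x = η y}ᶜ, G η ∂μ := by
  set E := {η : (Fin d → ℤ) → Bool | η x = η y}
  have hE : MeasurableSet Eᶜ := (measurableSet_apply_eq_apply x y).compl
  set h : ((Fin d → ℤ) → Bool) → ℝ≥0∞ := fun η => ENNReal.ofReal (bernoulliMass ρ (η y))⁻¹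
  have hh : Measurable h := (Measurable.of_discrete (f := fun c : Bool =>
    ENNReal.ofReal (bernoulliMass ρ c)⁻¹)).comp (measurable_pi_apply y)
  have hsymm : ∫⁻ η in Eᶜ, h η * G η ∂μ = ∫⁻ η in Eᶜ, h (exchange x y η) * G η ∂μ := by
    have hpre : exchange x y ⁻¹' Eᶜ = Eᶜ := by
      ext η
      simp [E, exchange_apply_eq_iff]
    rw [← (hμ.measurePreserving_exchange x y).setLIntegral_comp_preimage hE
      (f := fun η => h η * G η) (hh.mul hG), hpre]
    simp only [hG_exchange]
  have hpair : ∀ η ∈ Eᶜ, h η + h (exchange x y η) = ENNReal.ofReal (ρ * (1 - ρ))⁻¹ := by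
    intro η hη
    have hy : exchange x y η y = !η y := by
      simp [exchange_eq_comp_swap, Bool.eq_not.2 hη]
    simp only [h, hy]
    rw [← ENNReal.ofReal_add (inv_nonneg.2 (bernoulliMass_pos hρ _).le)
      (inv_nonneg.2 (bernoulliMass_pos hρ _).le), inv_bernoulliMass_add_inv_bernoulliMass_not hρ]
  rw [two_mul, ← lintegral_const_mul _ hG]
  nth_rw 2 [hsymm]
  rw [← lintegral_add_left (f := fun η => h η * G η) (hh.mul hG)]
  exact setLIntegral_congr_fun hE fun η hη => by rw [← add_mul, hpair η hη]

lemma lintegral_comp_kawasakiBase_le (hρ : ρ ∈ Set.Ioo (0 : ℝ) 1)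
    (hμ : IsBernoulliProduct ρ μ) {x y : Fin d → ℤ} (hxy : x ≠ y)
    {G : ((Fin d → ℤ) → Bool) → ℝ≥0∞} (hG : Measurable G)
    (hG_exchange : ∀ η, G (exchange x y η) = G η) :
    ∫⁻ η, G (kawasakiBase x y η) ∂μ ≤
      ENNReal.ofReal (1 / (2 * (ρ * (1 - ρ)))) * ∫⁻ η, G η ∂μ := by
  have htwo : 2 * ∫⁻ η, G (kawasakiBase x y η) ∂μ ≤
      ENNReal.ofReal (ρ * (1 - ρ))⁻¹ * ∫⁻ η, G η ∂μ := by
    rw [hμ.lintegral_comp_kawasakiBase hρ hxy hG,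
      hμ.two_mul_setLIntegral_inv_bernoulliMass_mul hρ x y hG hG_exchange]
    gcongr
    exact Measure.restrict_le_self
  have hconst : ENNReal.ofReal (ρ * (1 - ρ))⁻¹ =
      2 * ENNReal.ofReal (1 / (2 * (ρ * (1 - ρ)))) := by
    rw [← ENNReal.ofReal_ofNat 2, ← ENNReal.ofReal_mul zero_le_two]
    congr 1
    field_simp
  rw [hconst, mul_assoc] at htwo
  exact (ENNReal.mul_le_mul_iff_right two_ne_zero ENNReal.ofNat_ne_top).1 htwo

lemma eLpNorm_kawasakiDeriv_comp_kawasakiBase_le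
    (hρ : ρ ∈ Set.Ioo (0 : ℝ) 1) (hμ : IsBernoulliProduct ρ μ) {x y : Fin d → ℤ} (hxy : x ≠ y)
    {f : ((Fin d → ℤ) → Bool) → ℝ} (hf : Measurable f) :
    eLpNorm (kawasakiDeriv x y f ∘ kawasakiBase x y) 2 μ ≤
      ENNReal.ofReal (1 / Real.sqrt (2 * (ρ * (1 - ρ)))) * eLpNorm (kawasakiDeriv x y f) 2 μ := by
  refine eLpNorm_two_le_of_lintegral_le ?_
  have hχ : 0 ≤ 2 * (ρ * (1 - ρ)) := by nlinarith [hρ.1, hρ.2]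
  rw [← ENNReal.ofReal_pow (by positivity), div_pow, one_pow, Real.sq_sqrt hχ]
  refine hμ.lintegral_comp_kawasakiBase_le hρ hxy
    ((measurable_kawasakiDeriv hf x y).enorm.pow_const 2) fun η => ?_
  rw [kawasakiDeriv_exchange, enorm_neg]

end IsBernoulliProduct

/-- Lemma 2.1 (Glauber meets Kawasaki): for `ρ ∈ (0,1)` and any square-integrable `f`,
`‖π_x f‖_{L²} ≤ ‖π_y f‖_{L²} + (1/√(2ρ(1-ρ))) ‖π_{x,y} f‖_{L²}`. -/
theorem glauber_exchange_L2_bound {d : ℕ} (ρ : ℝ) (hρ : ρ ∈ Set.Ioo (0 : ℝ) 1)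
    (μ : Measure ((Fin d → ℤ) → Bool)) (hμ : IsBernoulliProduct ρ μ)
    (f : ((Fin d → ℤ) → Bool) → ℝ) (hf : MemLp f 2 μ) (x y : Fin d → ℤ) :
    eLpNorm (glauberDeriv x f) 2 μ ≤
      eLpNorm (glauberDeriv y f) 2 μ +
        ENNReal.ofReal (1 / Real.sqrt (2 * (ρ * (1 - ρ)))) * eLpNorm (kawasakiDeriv x y f) 2 μ := by
  rcases eq_or_ne x y with rfl | hxy
  · exact le_self_add
  obtain ⟨g, hg, hfg⟩ := hf.aestronglyMeasurable
  replace hg := hg.measurable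
  rw [eLpNorm_congr_ae (hμ.glauberDeriv_ae_eq hρ hfg x),
    eLpNorm_congr_ae (hμ.glauberDeriv_ae_eq hρ hfg y),
    eLpNorm_congr_ae (hμ.kawasakiDeriv_ae_eq hfg x y)]
  have hdecomp : glauberDeriv x g =
      glauberDeriv y g ∘ glauberBase x y + kawasakiDeriv x y g ∘ kawasakiBase x y :=
    funext (glauberDeriv_eq_add g x y)
  calc eLpNorm (glauberDeriv x g) 2 μ
      ≤ eLpNorm (glauberDeriv y g ∘ glauberBase x y) 2 μ +
          eLpNorm (kawasakiDeriv x y g ∘ kawasakiBase x y) 2 μ := by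
        rw [hdecomp]
        exact eLpNorm_add_le
          ((measurable_glauberDeriv hg y).comp
            (hμ.measurePreserving_glauberBase x y).measurable).aestronglyMeasurable
          ((measurable_kawasakiDeriv hg x y).comp
            (measurable_kawasakiBase x y)).aestronglyMeasurable
          one_le_two
    _ ≤ _ := add_le_add
        (eLpNorm_comp_measurePreserving (measurable_glauberDeriv hg y).aestronglyMeasurable
          (hμ.measurePreserving_glauberBase x y)).le
        (hμ.eLpNorm_kawasakiDeriv_comp_kawasakiBase_le hρ hxy hg)
end

section
/- Let L, N ∈ N₊ and let u, f : (T_L^d)^N → R satisfy the discrete Poisson equation −Σ_{i=1}^N Σ_{e∈U} D_{x_i,e} u = f on the N-fold product of the discrete torus T_L^d = (Z/LZ)^d, where U = {±e_1,…,±e_d} and D_{x_i,e} u(x_1,…,x_N) = u(x_1,…,x_i+e,…,x_N) − u(x_1,…,x_N). Then the averaged second-difference energy equals exactly four times the averaged square of f: (1/L^{dN}) Σ Σ_{i,j=1}^N Σ_{e,e'∈U} (D_{x_j,e'} D_{x_i,e} u)² = 4 (1/L^{dN}) Σ f², where the outer sums run over all (x_1,…,x_N) ∈ (T_L^d)^N.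 -/
/-- The set of unit directions `U = {±e_1, …, ±e_d}` in the discrete torus `(ℤ/Lℤ)^d`. -/
def torusDirs (L d : ℕ) : Finset (Fin d → ZMod L) :=
  Finset.univ.image fun p : Fin d × Bool =>
    (fun j => if j = p.1 then (if p.2 then (1 : ZMod L) else -1) else 0)

/-- The finite-difference operator `D_{x_i,e} u` moving the `i`-th particle by `e`. -/
def Dop {L N d : ℕ} (i : Fin N) (e : Fin d → ZMod L)
    (u : (Fin N → Fin d → ZMod L) → ℝ) : (Fin N → Fin d → ZMod L) → ℝ :=
  fun x => u (Function.update x i (x i + e)) - u x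

namespace H2aux

variable {L N d : ℕ}

/-- translation of the `i`-th particle by `e`. -/
def T (i : Fin N) (e : Fin d → ZMod L) (x : Fin N → Fin d → ZMod L) :
    Fin N → Fin d → ZMod L := Function.update x i (x i + e)

lemma Dop_eq (i : Fin N) (e : Fin d → ZMod L) (u : (Fin N → Fin d → ZMod L) → ℝ) (x) :
    Dop i e u x = u (T i e x) - u x := rfl

lemma T_T_neg (i : Fin N) (e : Fin d → ZMod L) (x) : T i (-e) (T i e x) = x := by
  unfold T
  rw [Function.update_self, Function.update_idem]
  simp

lemma T_neg_T (i : Fin N) (e : Fin d → ZMod L) (x) : T i e (T i (-e) x) = x := by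
  have := T_T_neg i (-e) x; rwa [neg_neg] at this

lemma T_comm (i j : Fin N) (e e' : Fin d → ZMod L) (x) :
    T i e (T j e' x) = T j e' (T i e x) := by
  rcases eq_or_ne i j with rfl | h
  · unfold T
    rw [Function.update_self, Function.update_idem, Function.update_self,
      Function.update_idem, add_assoc, add_assoc, add_comm e' e]
  · unfold T
    rw [Function.update_of_ne h, Function.update_of_ne h.symm, Function.update_comm h]

variable [NeZero L]

/-- translation as an equivalence. -/
def Te (i : Fin N) (e : Fin d → ZMod L) :
    Equiv (Fin N → Fin d → ZMod L) (Fin N → Fin d → ZMod L) where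
  toFun := T i e
  invFun := T i (-e)
  left_inv := T_T_neg i e
  right_inv := T_neg_T i e

lemma sum_T (i : Fin N) (e : Fin d → ZMod L) (g : (Fin N → Fin d → ZMod L) → ℝ) :
    ∑ x : Fin N → Fin d → ZMod L, g (T i e x) = ∑ x : Fin N → Fin d → ZMod L, g x :=
  Equiv.sum_comp (Te i e) g

/-- integration by parts. -/
lemma ibp (i : Fin N) (e : Fin d → ZMod L) (u v : (Fin N → Fin d → ZMod L) → ℝ) :
    ∑ x : Fin N → Fin d → ZMod L, Dop i e u x * v x
      = ∑ x : Fin N → Fin d → ZMod L, u x * Dop i (-e) v x := by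
  simp only [Dop_eq, sub_mul, mul_sub]
  rw [Finset.sum_sub_distrib, Finset.sum_sub_distrib]
  congr 1
  calc ∑ x : Fin N → Fin d → ZMod L, u (T i e x) * v x
      = ∑ x : Fin N → Fin d → ZMod L, u (T i e (T i (-e) x)) * v (T i (-e) x) :=
        (sum_T i (-e) (fun x => u (T i e x) * v x)).symm
    _ = ∑ x : Fin N → Fin d → ZMod L, u x * v (T i (-e) x) := by
        refine Finset.sum_congr rfl fun x _ => ?_
        rw [T_neg_T]

lemma Dop_comm (i j : Fin N) (e e' : Fin d → ZMod L) (u : (Fin N → Fin d → ZMod L) → ℝ) (x) :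
    Dop j e' (Dop i e u) x = Dop i e (Dop j e' u) x := by
  simp only [Dop_eq, T_comm i j e e' x]
  ring

lemma neg_mem_dirs {e : Fin d → ZMod L} (h : e ∈ torusDirs L d) : -e ∈ torusDirs L d := by
  simp only [torusDirs, Finset.mem_image, Finset.mem_univ, true_and] at h ⊢
  obtain ⟨p, rfl⟩ := h
  refine ⟨(p.1, !p.2), ?_⟩
  funext j
  by_cases hj : j = p.1 <;> cases hp : p.2 <;> simp [hj]

lemma sum_dirs_neg (F : (Fin d → ZMod L) → ℝ) :
    ∑ e ∈ torusDirs L d, F (-e) = ∑ e ∈ torusDirs L d, F e := by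
  refine Finset.sum_nbij' (fun e => -e) (fun e => -e) (fun a ha => neg_mem_dirs ha)
    (fun a ha => neg_mem_dirs ha) (fun a _ => neg_neg a) (fun a _ => neg_neg a)
    (fun a _ => rfl)

/-- the (negative) discrete Laplacian. -/
def Aop (u : (Fin N → Fin d → ZMod L) → ℝ) : (Fin N → Fin d → ZMod L) → ℝ :=
  fun x => ∑ i : Fin N, ∑ e ∈ torusDirs L d, Dop i e u x

lemma Dop_neg_Dop (i : Fin N) (e : Fin d → ZMod L) (w : (Fin N → Fin d → ZMod L) → ℝ) (x) :
    Dop i (-e) (Dop i e w) x = -(Dop i e w x) - Dop i (-e) w x := by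
  simp only [Dop_eq]
  rw [T_neg_T]
  ring

lemma sum_lap (w : (Fin N → Fin d → ZMod L) → ℝ) (x) :
    ∑ i : Fin N, ∑ e ∈ torusDirs L d, Dop i (-e) (Dop i e w) x = -2 * Aop w x := by
  unfold Aop
  rw [Finset.mul_sum]
  refine Finset.sum_congr rfl fun i _ => ?_
  simp only [Dop_neg_Dop]
  rw [Finset.sum_sub_distrib]
  rw [sum_dirs_neg (fun e => Dop i e w x)]
  rw [Finset.sum_neg_distrib]
  ring

lemma Aop_Dop (i : Fin N) (e : Fin d → ZMod L) (u : (Fin N → Fin d → ZMod L) → ℝ) (x) :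
    Aop (Dop i e u) x = Dop i e (Aop u) x := by
  unfold Aop
  simp only [Dop_eq, Finset.sum_sub_distrib]
  simp only [fun (j : Fin N) (e' : Fin d → ZMod L) => T_comm i j e e' x]
  abel

lemma sum_dirs_neg_op (w : (Fin N → Fin d → ZMod L) → ℝ) (x) :
    ∑ i : Fin N, ∑ e ∈ torusDirs L d, Dop i (-e) w x = Aop w x := by
  unfold Aop
  exact Finset.sum_congr rfl fun i _ => sum_dirs_neg (fun e => Dop i e w x)

lemma sum_swap3 {α β γ : Type*} [Fintype α] [Fintype β] (t : Finset γ) (g : α → β → γ → ℝ) :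
    ∑ x : α, ∑ j : β, ∑ e ∈ t, g x j e = ∑ j : β, ∑ e ∈ t, ∑ x : α, g x j e := by
  rw [Finset.sum_comm]
  exact Finset.sum_congr rfl fun j _ => Finset.sum_comm

/-- Step 1: second-order energy of `v` via the Laplacian. -/
lemma step1 (v : (Fin N → Fin d → ZMod L) → ℝ) :
    ∑ x : Fin N → Fin d → ZMod L, ∑ j : Fin N, ∑ e' ∈ torusDirs L d, (Dop j e' v x) ^ 2
      = -2 * ∑ x : Fin N → Fin d → ZMod L, v x * Aop v x := by
  calc ∑ x : Fin N → Fin d → ZMod L, ∑ j : Fin N, ∑ e' ∈ torusDirs L d, (Dop j e' v x) ^ 2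
      = ∑ j : Fin N, ∑ e' ∈ torusDirs L d, ∑ x : Fin N → Fin d → ZMod L, (Dop j e' v x) ^ 2 :=
        sum_swap3 _ _
    _ = ∑ j : Fin N, ∑ e' ∈ torusDirs L d, ∑ x : Fin N → Fin d → ZMod L,
          v x * Dop j (-e') (Dop j e' v) x := by
        refine Finset.sum_congr rfl fun j _ => Finset.sum_congr rfl fun e' _ => ?_
        rw [← ibp]
        exact Finset.sum_congr rfl fun x _ => by rw [sq]
    _ = ∑ x : Fin N → Fin d → ZMod L, ∑ j : Fin N, ∑ e' ∈ torusDirs L d,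
          v x * Dop j (-e') (Dop j e' v) x := (sum_swap3 _ _).symm
    _ = ∑ x : Fin N → Fin d → ZMod L, v x * (-2 * Aop v x) := by
        refine Finset.sum_congr rfl fun x _ => ?_
        simp only [← Finset.mul_sum]
        rw [sum_lap]
    _ = -2 * ∑ x : Fin N → Fin d → ZMod L, v x * Aop v x := by
        rw [Finset.mul_sum]
        exact Finset.sum_congr rfl fun x _ => by ring

/-- Step 2. -/
lemma step2 (u : (Fin N → Fin d → ZMod L) → ℝ) :
    ∑ i : Fin N, ∑ e ∈ torusDirs L d, ∑ x : Fin N → Fin d → ZMod L,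
        Dop i e u x * Aop (Dop i e u) x
      = -2 * ∑ x : Fin N → Fin d → ZMod L, u x * Aop (Aop u) x := by
  calc ∑ i : Fin N, ∑ e ∈ torusDirs L d, ∑ x : Fin N → Fin d → ZMod L,
          Dop i e u x * Aop (Dop i e u) x
      = ∑ i : Fin N, ∑ e ∈ torusDirs L d, ∑ x : Fin N → Fin d → ZMod L,
          u x * Dop i (-e) (Dop i e (Aop u)) x := by
        refine Finset.sum_congr rfl fun i _ => Finset.sum_congr rfl fun e _ => ?_
        rw [← ibp]
        exact Finset.sum_congr rfl fun x _ => by rw [Aop_Dop]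
    _ = ∑ x : Fin N → Fin d → ZMod L, ∑ i : Fin N, ∑ e ∈ torusDirs L d,
          u x * Dop i (-e) (Dop i e (Aop u)) x := (sum_swap3 _ _).symm
    _ = ∑ x : Fin N → Fin d → ZMod L, u x * (-2 * Aop (Aop u) x) := by
        refine Finset.sum_congr rfl fun x _ => ?_
        simp only [← Finset.mul_sum]
        rw [sum_lap]
    _ = -2 * ∑ x : Fin N → Fin d → ZMod L, u x * Aop (Aop u) x := by
        rw [Finset.mul_sum]
        exact Finset.sum_congr rfl fun x _ => by ring

/-- Step 3: self-adjointness of the Laplacian. -/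
lemma step3 (u : (Fin N → Fin d → ZMod L) → ℝ) :
    ∑ x : Fin N → Fin d → ZMod L, Aop u x * Aop u x
      = ∑ x : Fin N → Fin d → ZMod L, u x * Aop (Aop u) x := by
  calc ∑ x : Fin N → Fin d → ZMod L, Aop u x * Aop u x
      = ∑ x : Fin N → Fin d → ZMod L, ∑ i : Fin N, ∑ e ∈ torusDirs L d,
          Dop i e u x * Aop u x := by
        refine Finset.sum_congr rfl fun x _ => ?_
        rw [show Aop u x * Aop u x
            = (∑ i : Fin N, ∑ e ∈ torusDirs L d, Dop i e u x) * Aop u x from rfl]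
        rw [Finset.sum_mul]
        exact Finset.sum_congr rfl fun i _ => (Finset.sum_mul _ _ _)
    _ = ∑ i : Fin N, ∑ e ∈ torusDirs L d, ∑ x : Fin N → Fin d → ZMod L,
          Dop i e u x * Aop u x := sum_swap3 _ _
    _ = ∑ i : Fin N, ∑ e ∈ torusDirs L d, ∑ x : Fin N → Fin d → ZMod L,
          u x * Dop i (-e) (Aop u) x := by
        exact Finset.sum_congr rfl fun i _ => Finset.sum_congr rfl fun e _ => ibp i e u (Aop u)
    _ = ∑ x : Fin N → Fin d → ZMod L, ∑ i : Fin N, ∑ e ∈ torusDirs L d,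
          u x * Dop i (-e) (Aop u) x := (sum_swap3 _ _).symm
    _ = ∑ x : Fin N → Fin d → ZMod L, u x * Aop (Aop u) x := by
        refine Finset.sum_congr rfl fun x _ => ?_
        simp only [← Finset.mul_sum]
        rw [sum_dirs_neg_op]

end H2aux

open H2aux in
/-- Dimension-free H² identity on the torus (Lemma 2.10): if
`−Σ_{i=1}^N Σ_{e∈U} D_{x_i,e} u = f` on `(T_L^d)^N`, then the averaged second-difference
energy equals `4` times the averaged square of `f`. -/
theorem H2_identity_torus (L N d : ℕ) [NeZero L] (hN : 0 < N)
    (u f : (Fin N → Fin d → ZMod L) → ℝ)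
    (hPoisson : ∀ x, -(∑ i : Fin N, ∑ e ∈ torusDirs L d, Dop i e u x) = f x) :
    (1 / (L : ℝ) ^ (d * N)) *
        ∑ x : Fin N → Fin d → ZMod L, ∑ i : Fin N, ∑ j : Fin N,
          ∑ e ∈ torusDirs L d, ∑ e' ∈ torusDirs L d, (Dop j e' (Dop i e u) x) ^ 2
      = 4 * ((1 / (L : ℝ) ^ (d * N)) * ∑ x : Fin N → Fin d → ZMod L, f x ^ 2) := by
  have hf : ∀ x, f x = -(Aop u x) := fun x => (hPoisson x).symm
  have key : (∑ x : Fin N → Fin d → ZMod L, ∑ i : Fin N, ∑ j : Fin N,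
        ∑ e ∈ torusDirs L d, ∑ e' ∈ torusDirs L d, (Dop j e' (Dop i e u) x) ^ 2)
      = 4 * ∑ x : Fin N → Fin d → ZMod L, f x ^ 2 := by
    calc ∑ x : Fin N → Fin d → ZMod L, ∑ i : Fin N, ∑ j : Fin N,
          ∑ e ∈ torusDirs L d, ∑ e' ∈ torusDirs L d, (Dop j e' (Dop i e u) x) ^ 2
        = ∑ i : Fin N, ∑ x : Fin N → Fin d → ZMod L, ∑ j : Fin N,
            ∑ e ∈ torusDirs L d, ∑ e' ∈ torusDirs L d, (Dop j e' (Dop i e u) x) ^ 2 :=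
          Finset.sum_comm
      _ = ∑ i : Fin N, ∑ e ∈ torusDirs L d, ∑ x : Fin N → Fin d → ZMod L, ∑ j : Fin N,
            ∑ e' ∈ torusDirs L d, (Dop j e' (Dop i e u) x) ^ 2 := by
          refine Finset.sum_congr rfl fun i _ => ?_
          rw [show (∑ x : Fin N → Fin d → ZMod L, ∑ j : Fin N,
              ∑ e ∈ torusDirs L d, ∑ e' ∈ torusDirs L d, (Dop j e' (Dop i e u) x) ^ 2)
            = ∑ x : Fin N → Fin d → ZMod L, ∑ e ∈ torusDirs L d, ∑ j : Fin N,
              ∑ e' ∈ torusDirs L d, (Dop j e' (Dop i e u) x) ^ 2 from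
            Finset.sum_congr rfl fun x _ => Finset.sum_comm]
          exact Finset.sum_comm
      _ = ∑ i : Fin N, ∑ e ∈ torusDirs L d,
            (-2 * ∑ x : Fin N → Fin d → ZMod L, Dop i e u x * Aop (Dop i e u) x) := by
          exact Finset.sum_congr rfl fun i _ => Finset.sum_congr rfl fun e _ => step1 _
      _ = -2 * ∑ i : Fin N, ∑ e ∈ torusDirs L d, ∑ x : Fin N → Fin d → ZMod L,
            Dop i e u x * Aop (Dop i e u) x := by
          rw [Finset.mul_sum]
          exact Finset.sum_congr rfl fun i _ => (Finset.mul_sum _ _ _).symm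
      _ = -2 * (-2 * ∑ x : Fin N → Fin d → ZMod L, u x * Aop (Aop u) x) := by
          rw [step2]
      _ = 4 * ∑ x : Fin N → Fin d → ZMod L, u x * Aop (Aop u) x := by ring
      _ = 4 * ∑ x : Fin N → Fin d → ZMod L, Aop u x * Aop u x := by rw [step3]
      _ = 4 * ∑ x : Fin N → Fin d → ZMod L, f x ^ 2 := by
          congr 1
          exact Finset.sum_congr rfl fun x _ => by rw [hf x]; ring
  rw [key]
  ring
end

section
/- Local equivalence of ensembles, positive case: Let L, ℓ ∈ N₊ with 10ℓ² ≤ L and 0 ≤ M ≤ L^d, set ρ̂ = M/|Λ_L| where Λ_L = (−L/2, L/2)^d ∩ Z^d. Then for every function f depending only on coordinates in Λ_ℓ such that the canonical-ensemble averages ⟨f⟩_{Λ_ℓ,N} ≥ 0 for all N, one has ⟨f⟩_{Λ_L,M} ≤ (1 + 4(ℓ²/L)^d) ⟨f⟩_{ρ̂}, where ⟨·⟩_{Λ_L,M} is the expectation under the uniform measure on configurations of Λ_L with exactly M particles, and ⟨·⟩_{ρ̂} is the Bernoulli(ρ̂) product expectation. -/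
open MeasureTheory

/-- The discrete cube `Λ_L = (−L/2, L/2)^d ∩ ℤ^d`. -/
noncomputable def cubeF (d L : ℕ) : Finset (Fin d → ℤ) :=
  Fintype.piFinset fun _ : Fin d =>
    (Finset.Icc (-(L : ℤ)) (L : ℤ)).filter fun k => -(L : ℤ) < 2 * k ∧ 2 * k < (L : ℤ)

/-- The exclusion configuration associated with a particle set `A`. -/
def configOf {d : ℕ} (A : Finset (Fin d → ℤ)) : (Fin d → ℤ) → Bool :=
  fun z => decide (z ∈ A)

/-- The canonical-ensemble average `⟨f⟩_{Λ,M}`: the average of `f` over the uniform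
measure on configurations of `Λ` with exactly `M` particles. -/
noncomputable def canonicalAvg {d : ℕ} (Λ : Finset (Fin d → ℤ)) (M : ℕ)
    (f : ((Fin d → ℤ) → Bool) → ℝ) : ℝ :=
  (∑ A ∈ Λ.powersetCard M, f (configOf A)) / ((Λ.powersetCard M).card : ℝ)

/-!
Since `f` only sees `Λ_ℓ`, both averages split according to the number `N` of particles in
`Λ_ℓ`. With `n = |Λ_ℓ|`, `K = |Λ_L|`, `ρ = M / K` and `S_N = ∑_{B ⊆ Λ_ℓ, |B| = N} f(B) ≥ 0`,
`⟨f⟩_{Λ_L,M} = ∑_N C(K-n, M-N) / C(K, M) · S_N` and `⟨f⟩_ρ = ∑_N ρ^N (1-ρ)^(n-N) · S_N`,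
so it suffices to compare the weights. Writing falling factorials as
`x^(k) = x^k ∏_{i<k} (1 - i/x)`, the ratio of the weights is
`∏_{i<N} (1 - i/M) ∏_{j<n-N} (1 - j/(K-M)) / ∏_{t<n} (1 - t/K)`. The two products in the
numerator merge into at most `∏_{t<n-1} (1 - t/K)`, because by the mediant inequality
`(a + b)/(M + (K-M)) ≤ max (a/M) (b/(K-M))` every factor of the merged product dominates a factor
removed from one of them. So the ratio is at most `1 / (1 - (n-1)/K)`, and this is at most
`1 + 4(ℓ²/L)^d` since `(n-1)/K` is bounded by `(ℓ²/L)^d` and by `1/2`.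
-/

open Finset

noncomputable def fallingRatio (x : ℝ) (k : ℕ) : ℝ := ∏ i ∈ range k, (1 - i / x)

lemma fallingRatio_succ (x : ℝ) (k : ℕ) :
    fallingRatio x (k + 1) = fallingRatio x k * (1 - k / x) :=
  prod_range_succ _ _

lemma fallingRatio_pos {x : ℝ} {k : ℕ} (hk : (k : ℝ) ≤ x) : 0 < fallingRatio x k :=
  prod_pos fun i hi => by
    have hix : (i : ℝ) < x := (Nat.cast_lt.2 (mem_range.1 hi)).trans_le hk
    exact sub_pos.2 ((div_lt_one ((Nat.cast_nonneg i).trans_lt hix)).2 hix)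

lemma prod_range_sub_eq_pow_mul_fallingRatio (x : ℝ) (k : ℕ) :
    ∏ i ∈ range k, (x - i) = x ^ k * fallingRatio x k := by
  rcases eq_or_ne x 0 with rfl | hx
  · rcases k.eq_zero_or_pos with rfl | hk
    · simp [fallingRatio]
    · rw [zero_pow hk.ne', zero_mul]
      exact prod_eq_zero (mem_range.2 hk) (by simp)
  · have h := pow_card_mul_prod (s := range k) (b := x) (f := fun i : ℕ => 1 - (i : ℝ) / x)
    rw [card_range] at h
    rw [fallingRatio, h]
    exact prod_congr rfl fun i _ => by field_simp

/-- The mediant `s / (m + q)` of `a' / m` and `b' / q`, where `a' + b' = s`, is at most one of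
them. -/
lemma exists_succ_div_le_or_exists_succ_div_le {m q : ℝ} {a b s : ℕ} (hab : a + b = s + 2)
    (ha : (a : ℝ) ≤ m) (hb : (b : ℝ) ≤ q) (hm : 0 ≤ m) (hq : 0 ≤ q) :
    (∃ a', a = a' + 1 ∧ (s : ℝ) / (m + q) ≤ a' / m) ∨
      (∃ b', b = b' + 1 ∧ (s : ℝ) / (m + q) ≤ b' / q) := by
  obtain _ | a' := a
  · refine .inr ⟨s + 1, by omega, ?_⟩
    have hq : 0 < q := by rw [show b = s + 2 by omega] at hb; push_cast at hb; linarith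
    calc (s : ℝ) / (m + q) ≤ s / q := div_le_div_of_nonneg_left (by positivity) hq (by linarith)
      _ ≤ (s + 1 : ℕ) / q := by gcongr; simp
  obtain _ | b' := b
  · refine .inl ⟨s + 1, by omega, ?_⟩
    have hm : 0 < m := by rw [show a' + 1 = s + 2 by omega] at ha; push_cast at ha; linarith
    calc (s : ℝ) / (m + q) ≤ s / m := div_le_div_of_nonneg_left (by positivity) hm (by linarith)
      _ ≤ (s + 1 : ℕ) / m := by gcongr; simp
  have hm : 0 < m := by push_cast at ha; linarith
  have hq : 0 < q := by push_cast at hb; linarith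
  have hs : (s : ℝ) = a' + b' := by exact_mod_cast (by omega : s = a' + b')
  by_contra! h
  obtain ⟨ha', hb'⟩ := And.intro (h.1 a' rfl) (h.2 b' rfl)
  rw [div_lt_div_iff₀ hm (by positivity)] at ha'
  rw [div_lt_div_iff₀ hq (by positivity)] at hb'
  nlinarith

lemma fallingRatio_succ_mul_le {m q : ℝ} {a b s : ℕ} (ha : (a + 1 : ℝ) ≤ m)
    (hsmq : (s : ℝ) ≤ m + q) (hle : (s : ℝ) / (m + q) ≤ a / m)
    (h : fallingRatio m a * fallingRatio q b ≤ fallingRatio (m + q) s) :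
    fallingRatio m (a + 1) * fallingRatio q b ≤ fallingRatio (m + q) (s + 1) := by
  have ham : (a : ℝ) / m ≤ 1 := div_le_one_of_le₀ (by linarith) (by linarith)
  rw [fallingRatio_succ, fallingRatio_succ, mul_right_comm]
  exact mul_le_mul h (by linarith) (by linarith) (fallingRatio_pos hsmq).le

lemma fallingRatio_mul_le {m q : ℝ} (hm : 0 ≤ m) (hq : 0 ≤ q) {a b : ℕ} (ha : (a : ℝ) ≤ m)
    (hb : (b : ℝ) ≤ q) :
    fallingRatio m a * fallingRatio q b ≤ fallingRatio (m + q) (a + b - 1) := by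
  induction hs : a + b - 1 generalizing a b with
  | zero =>
    obtain ⟨ha1, hb1⟩ : a ≤ 1 ∧ b ≤ 1 := by omega
    interval_cases a <;> interval_cases b <;> simp [fallingRatio]
  | succ s ih =>
    have hsmq : (s : ℝ) ≤ m + q := by
      have : (s : ℝ) + 2 = a + b := by exact_mod_cast (by omega : s + 2 = a + b)
      linarith
    rcases exists_succ_div_le_or_exists_succ_div_le (by omega : a + b = s + 2) ha hb hm hq with
      ⟨a', rfl, hle⟩ | ⟨b', rfl, hle⟩
    · push_cast at ha
      exact fallingRatio_succ_mul_le ha hsmq hle (ih (by linarith) hb (by omega))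
    · push_cast at hb
      rw [mul_comm, add_comm m]
      exact fallingRatio_succ_mul_le hb (by linarith) (by rwa [add_comm q])
        (by rw [mul_comm, add_comm q]; exact ih ha (by linarith) (by omega))

lemma fallingRatio_pred_le {K ε : ℝ} {n : ℕ} (hε : 0 ≤ ε) (hεK : 2 * ((n - 1 : ℕ) : ℝ) ≤ ε * K)
    (hK : 2 * ((n - 1 : ℕ) : ℝ) ≤ K) : fallingRatio K (n - 1) ≤ (1 + ε) * fallingRatio K n := by
  obtain _ | k := n
  · simp only [fallingRatio, range_zero, prod_empty]
    linarith
  simp only [Nat.add_sub_cancel] at hεK hK ⊢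
  have hk0 : (0 : ℝ) ≤ k := k.cast_nonneg
  have hx : (k : ℝ) / K ≤ 1 / 2 := div_le_of_le_mul₀ (by linarith) (by norm_num) (by linarith)
  have hxε : (k : ℝ) / K ≤ ε / 2 := div_le_of_le_mul₀ (by linarith) (by linarith) (by linarith)
  have hgain : 1 ≤ (1 + ε) * (1 - k / K) := by nlinarith
  rw [fallingRatio_succ]
  calc fallingRatio K k = fallingRatio K k * 1 := (mul_one _).symm
    _ ≤ fallingRatio K k * ((1 + ε) * (1 - k / K)) :=
      mul_le_mul_of_nonneg_left hgain (fallingRatio_pos (by linarith)).le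
    _ = (1 + ε) * (fallingRatio K k * (1 - k / K)) := by ring

lemma cast_descFactorial_eq_pow_mul_fallingRatio (a k : ℕ) :
    (a.descFactorial k : ℝ) = (a : ℝ) ^ k * fallingRatio a k := by
  rw [← descPochhammer_eval_eq_descFactorial, descPochhammer_eval_eq_prod_range,
    prod_range_sub_eq_pow_mul_fallingRatio]

open Nat in
lemma choose_sub_mul_descFactorial {K n M N : ℕ} (hnK : n ≤ K) (hMK : M ≤ K) (hNM : N ≤ M)
    (hNn : N ≤ n) (hsup : M - N ≤ K - n) :
    (K - n).choose (M - N) * K.descFactorial n =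
      K.choose M * (M.descFactorial N * (K - M).descFactorial (n - N)) := by
  refine Nat.eq_of_mul_eq_mul_right (by positivity : 0 < (M - N)! * (K - n - (M - N))!) ?_
  have hLHS :
      (K - n).choose (M - N) * K.descFactorial n * ((M - N)! * (K - n - (M - N))!) = K ! := by
    calc _ = (K - n).choose (M - N) * (M - N)! * (K - n - (M - N))! * K.descFactorial n := by ring
      _ = K ! := by
        rw [choose_mul_factorial_mul_factorial hsup, factorial_mul_descFactorial hnK]
  have hRHS : K.choose M * (M.descFactorial N * (K - M).descFactorial (n - N)) *
      ((M - N)! * (K - n - (M - N))!) = K ! := by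
    rw [show K - n - (M - N) = K - M - (n - N) by omega]
    calc _ = K.choose M * ((M - N)! * M.descFactorial N) *
          ((K - M - (n - N))! * (K - M).descFactorial (n - N)) := by ring
      _ = K ! := by
        rw [factorial_mul_descFactorial hNM, factorial_mul_descFactorial (by omega),
          choose_mul_factorial_mul_factorial hMK]
  rw [hLHS, hRHS]

theorem choose_sub_div_choose_le {K n M N : ℕ} {ε : ℝ} (hnK : n ≤ K) (hMK : M ≤ K) (hNM : N ≤ M)
    (hNn : N ≤ n) (hε : 0 ≤ ε) (hεK : 2 * ((n - 1 : ℕ) : ℝ) ≤ ε * K)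
    (hK : 2 * ((n - 1 : ℕ) : ℝ) ≤ K) :
    ((K - n).choose (M - N) : ℝ) / K.choose M ≤
      (1 + ε) * ((M / K : ℝ) ^ N * (1 - M / K) ^ (n - N)) := by
  rcases K.eq_zero_or_pos with rfl | hK0
  · obtain ⟨rfl, rfl, rfl⟩ : n = 0 ∧ M = 0 ∧ N = 0 := by omega
    simpa using hε
  have hKR : (0 : ℝ) < K := Nat.cast_pos.2 hK0
  have hρ1 : (M / K : ℝ) ≤ 1 := div_le_one_of_le₀ (Nat.cast_le.2 hMK) hKR.le
  by_cases hsup : M - N ≤ K - n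
  swap
  · rw [Nat.choose_eq_zero_of_lt (by omega), Nat.cast_zero, zero_div]
    have : 0 ≤ 1 - (M / K : ℝ) := by linarith
    positivity
  have hKM : ((K - M : ℕ) : ℝ) = K - M := Nat.cast_sub hMK
  have hid : ((K - n).choose (M - N) : ℝ) * (K ^ n * fallingRatio K n) =
      K.choose M * ((M ^ N * (K - M) ^ (n - N)) *
        (fallingRatio M N * fallingRatio (K - M) (n - N))) := by
    have h := congrArg (Nat.cast : ℕ → ℝ) (choose_sub_mul_descFactorial hnK hMK hNM hNn hsup)
    simp only [Nat.cast_mul, cast_descFactorial_eq_pow_mul_fallingRatio, hKM] at h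
    rw [h]
    ring
  have hmerge : fallingRatio M N * fallingRatio (K - M) (n - N) ≤ (1 + ε) * fallingRatio K n := by
    have h := fallingRatio_mul_le (m := M) (q := K - M) (b := n - N) (by simp)
      (by rw [← hKM]; simp) (Nat.cast_le.2 hNM)
      (by rw [← hKM]; exact_mod_cast (by omega : n - N ≤ K - M))
    rw [add_sub_cancel, Nat.add_sub_cancel' hNn] at h
    exact h.trans (fallingRatio_pred_le hε hεK hK)
  have hbinom : (M / K : ℝ) ^ N * (1 - M / K) ^ (n - N) * K ^ n = M ^ N * (K - M) ^ (n - N) := by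
    rw [one_sub_div hKR.ne', div_pow, div_pow, ← Nat.add_sub_cancel' hNn, pow_add,
      Nat.add_sub_cancel_left]
    field_simp
  have hpos : (0 : ℝ) < K ^ n * fallingRatio K n :=
    mul_pos (pow_pos hKR n) (fallingRatio_pos (Nat.cast_le.2 hnK))
  rw [div_le_iff₀ (Nat.cast_pos.2 (Nat.choose_pos hMK)), ← mul_le_mul_iff_of_pos_right hpos, hid]
  calc (K.choose M : ℝ) * ((M ^ N * (K - M) ^ (n - N)) *
        (fallingRatio M N * fallingRatio (K - M) (n - N)))
      ≤ K.choose M * ((M ^ N * (K - M) ^ (n - N)) * ((1 + ε) * fallingRatio K n)) := by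
        have : (0 : ℝ) ≤ K - M := by linarith [Nat.cast_le (α := ℝ).2 hMK]
        gcongr
    _ = _ := by rw [← hbinom]; ring

section Canonical

variable {α : Type*} [DecidableEq α]

lemma card_filter_inter_eq {Λ Λ' B : Finset α} (hΛ : Λ' ⊆ Λ) (hB : B ⊆ Λ') (M : ℕ) :
    #{A ∈ Λ.powersetCard M | A ∩ Λ' = B} =
      if #B ≤ M then (#Λ - #Λ').choose (M - #B) else 0 := by
  split_ifs with hBM
  · rw [← card_sdiff_of_subset hΛ, ← card_powersetCard]
    refine card_bij' (fun A _ => A \ Λ') (fun C _ => B ∪ C) ?_ ?_ ?_ ?_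
    · intro A hA
      obtain ⟨⟨hAΛ, hAM⟩, hAB⟩ := And.imp_left mem_powersetCard.1 (mem_filter.1 hA)
      refine mem_powersetCard.2 ⟨sdiff_subset_sdiff hAΛ subset_rfl, ?_⟩
      have := card_inter_add_card_sdiff A Λ'
      rw [hAB] at this
      omega
    · intro C hC
      obtain ⟨hCΛ, hCM⟩ := mem_powersetCard.1 hC
      have hCΛ' : Disjoint C Λ' := (subset_sdiff.1 hCΛ).2
      refine mem_filter.2 ⟨mem_powersetCard.2
        ⟨union_subset (hB.trans hΛ) (hCΛ.trans sdiff_subset), ?_⟩, ?_⟩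
      · rw [card_union_of_disjoint (disjoint_of_subset_left hB hCΛ'.symm)]
        omega
      · rw [union_inter_distrib_right, inter_eq_left.2 hB,
          disjoint_iff_inter_eq_empty.1 hCΛ', union_empty]
    · intro A hA
      rw [← (mem_filter.1 hA).2, union_comm, sdiff_union_inter]
    · intro C hC
      rw [union_sdiff_distrib, sdiff_eq_empty_iff_subset.2 hB, empty_union,
        sdiff_eq_self_of_disjoint (subset_sdiff.1 (mem_powersetCard.1 hC).1).2]
  · refine card_eq_zero.2 (filter_eq_empty_iff.2 fun A hA hAB => hBM ?_)
    rw [← (mem_powersetCard.1 hA).2, ← hAB]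
    exact card_le_card inter_subset_left

lemma sum_powersetCard_inter_eq {Λ Λ' : Finset α} (hΛ : Λ' ⊆ Λ) (M : ℕ) (g : Finset α → ℝ) :
    ∑ A ∈ Λ.powersetCard M, g (A ∩ Λ') =
      ∑ N ∈ range (#Λ' + 1), (if N ≤ M then ((#Λ - #Λ').choose (M - N) : ℝ) else 0) *
        ∑ B ∈ Λ'.powersetCard N, g B := by
  rw [← sum_fiberwise_of_maps_to (t := Λ'.powerset) (g := (· ∩ Λ'))
    (fun A _ => mem_powerset.2 inter_subset_right), sum_powerset]
  refine sum_congr rfl fun N _ => ?_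
  rw [mul_sum]
  refine sum_congr rfl fun B hB => ?_
  obtain ⟨hBΛ', rfl⟩ := mem_powersetCard.1 hB
  rw [sum_congr rfl fun A hA => by rw [(mem_filter.1 hA).2], sum_const,
    card_filter_inter_eq hΛ hBΛ', nsmul_eq_mul]
  split_ifs <;> simp

end Canonical

lemma sum_powersetCard_eq_canonicalAvg_mul {d : ℕ} (Λ : Finset (Fin d → ℤ)) (N : ℕ)
    (f : ((Fin d → ℤ) → Bool) → ℝ) :
    ∑ A ∈ Λ.powersetCard N, f (configOf A) = canonicalAvg Λ N f * #(Λ.powersetCard N) := by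
  rcases eq_or_ne #(Λ.powersetCard N) 0 with h | h
  · rw [h, Nat.cast_zero, mul_zero, card_eq_zero.1 h, sum_empty]
  · rw [canonicalAvg, div_mul_cancel₀ _ (Nat.cast_ne_zero.2 h)]

def configCylinder {d : ℕ} (Λ B : Finset (Fin d → ℤ)) : Set ((Fin d → ℤ) → Bool) :=
  {η | ∀ x ∈ Λ, η x = configOf B x}

lemma measurableSet_configCylinder {d : ℕ} (Λ B : Finset (Fin d → ℤ)) :
    MeasurableSet (configCylinder Λ B) := by
  simp only [configCylinder, Set.ofPred_forall]
  exact .iInter fun x => .iInter fun _ =>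
    measurableSet_eq_fun (measurable_pi_apply x) measurable_const

lemma mem_configCylinder_iff {d : ℕ} {Λ B : Finset (Fin d → ℤ)} (hB : B ⊆ Λ)
    (η : (Fin d → ℤ) → Bool) : η ∈ configCylinder Λ B ↔ B = Λ.filter (η · = true) := by
  simp only [configCylinder, configOf, Set.mem_ofPred_eq, Finset.ext_iff, mem_filter]
  constructor
  · intro h x
    by_cases hx : x ∈ Λ
    · simp [h x hx, hx]
    · simpa [hx] using fun h' => hx (hB h')
  · intro h x hx
    simp [h, hx]

namespace IsBernoulliProduct

variable {d : ℕ} {ρ : ℝ} {μ : Measure ((Fin d → ℤ) → Bool)}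

lemma le_one (hμ : IsBernoulliProduct ρ μ) : ρ ≤ 1 := by
  have := hμ.1
  have h := prob_le_one (μ := μ) (s := {η | ∀ x ∈ ({0} : Finset (Fin d → ℤ)), η x = true})
  rw [hμ.2 {0} fun _ => true, prod_singleton, if_pos rfl, ENNReal.ofReal_le_one] at h
  exact h

lemma measure_configCylinder (hμ : IsBernoulliProduct ρ μ) (hρ : 0 ≤ ρ)
    {Λ B : Finset (Fin d → ℤ)} (hB : B ⊆ Λ) :
    μ (configCylinder Λ B) = ENNReal.ofReal (ρ ^ #B * (1 - ρ) ^ (#Λ - #B)) := by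
  have h1ρ : 0 ≤ 1 - ρ := sub_nonneg.2 hμ.le_one
  rw [configCylinder, hμ.2, ← ENNReal.ofReal_prod_of_nonneg fun x _ => by split_ifs <;> assumption]
  congr 1
  simp only [configOf, decide_eq_true_eq]
  rw [prod_ite, prod_const, prod_const, filter_mem_eq_inter, inter_eq_right.2 hB, filter_not,
    filter_mem_eq_inter, inter_eq_right.2 hB, card_sdiff_of_subset hB]

lemma integral_eq_sum (hμ : IsBernoulliProduct ρ μ) (hρ : 0 ≤ ρ) {Λ : Finset (Fin d → ℤ)}
    {f : ((Fin d → ℤ) → Bool) → ℝ} (hloc : ∀ η η', (∀ x ∈ Λ, η x = η' x) → f η = f η') :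
    ∫ η, f η ∂μ = ∑ N ∈ range (#Λ + 1),
      ρ ^ N * (1 - ρ) ^ (#Λ - N) * ∑ B ∈ Λ.powersetCard N, f (configOf B) := by
  have := hμ.1
  have hf : ∀ η, f η = ∑ B ∈ Λ.powerset,
      (configCylinder Λ B).indicator (fun _ => f (configOf B)) η := by
    intro η
    have hη := (mem_configCylinder_iff (filter_subset _ Λ) η).2 rfl
    rw [sum_eq_single_of_mem _ (mem_powerset.2 (filter_subset _ Λ)) fun B hB hne =>
      Set.indicator_of_notMem (fun h => hne ((mem_configCylinder_iff (mem_powerset.1 hB) η).1 h)) _,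
      Set.indicator_of_mem hη]
    exact hloc _ _ hη
  rw [integral_congr_ae (.of_forall hf), integral_finsetSum _ fun B _ =>
    (integrable_indicator_iff (measurableSet_configCylinder Λ B)).2
      (integrableOn_const (measure_ne_top μ _)), sum_powerset]
  have h1ρ : 0 ≤ 1 - ρ := sub_nonneg.2 hμ.le_one
  refine sum_congr rfl fun N _ => ?_
  rw [mul_sum]
  refine sum_congr rfl fun B hB => ?_
  obtain ⟨hBΛ, rfl⟩ := mem_powersetCard.1 hB
  rw [integral_indicator_const _ (measurableSet_configCylinder Λ B), measureReal_def,
    hμ.measure_configCylinder hρ hBΛ, ENNReal.toReal_ofReal (by positivity), smul_eq_mul]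

end IsBernoulliProduct

lemma cubeF_mono (d : ℕ) {ℓ L : ℕ} (h : ℓ ≤ L) : cubeF d ℓ ⊆ cubeF d L := by
  intro x hx
  simp only [cubeF, Fintype.mem_piFinset, mem_filter, mem_Icc] at hx ⊢
  exact fun i => by have := hx i; omega

lemma card_cubeF (d : ℕ) {m : ℕ} (hm : 0 < m) : #(cubeF d m) = (2 * ((m - 1) / 2) + 1) ^ d := by
  have hline : ((Icc (-(m : ℤ)) m).filter fun k => -(m : ℤ) < 2 * k ∧ 2 * k < m) =
      Icc (-(((m - 1) / 2 : ℕ) : ℤ)) ((m - 1) / 2 : ℕ) := by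
    ext k
    simp only [mem_filter, mem_Icc]
    omega
  rw [cubeF, Fintype.card_piFinset, prod_const, card_univ, Fintype.card_fin, hline, Int.card_Icc]
  congr 1
  omega

lemma card_cubeF_sub_one_le {d ℓ L : ℕ} (hℓ : 0 < ℓ) (hL : ℓ < L) :
    ((#(cubeF d ℓ) - 1 : ℕ) : ℝ) ≤ ((ℓ : ℝ) ^ 2 / L) ^ d * #(cubeF d L) := by
  have hnat : (#(cubeF d ℓ) - 1) * L ^ d ≤ (ℓ ^ 2) ^ d * #(cubeF d L) := by
    rw [card_cubeF d hℓ, card_cubeF d (by omega)]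
    rcases Nat.lt_or_ge ℓ 2 with hℓ1 | hℓ2
    · obtain rfl : ℓ = 1 := by omega
      simp
    have hside : (2 * ((ℓ - 1) / 2) + 1) * L ≤ ℓ ^ 2 * (2 * ((L - 1) / 2) + 1) := by
      generalize ha : 2 * ((ℓ - 1) / 2) + 1 = a
      generalize hb : 2 * ((L - 1) / 2) + 1 = b
      have hab : a ≤ ℓ ∧ L ≤ b + 1 ∧ 1 ≤ b := by omega
      calc a * L ≤ ℓ * (b + 1) := Nat.mul_le_mul hab.1 hab.2.1
        _ ≤ ℓ * (2 * b) := by gcongr; omega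
        _ ≤ ℓ * (ℓ * b) := by gcongr
        _ = ℓ ^ 2 * b := by ring
    calc _ ≤ (2 * ((ℓ - 1) / 2) + 1) ^ d * L ^ d := Nat.mul_le_mul_right _ (Nat.sub_le _ 1)
      _ ≤ (ℓ ^ 2 * (2 * ((L - 1) / 2) + 1)) ^ d := by rw [← mul_pow]; gcongr
      _ = _ := mul_pow ..
  have hLd : (0 : ℝ) < (L : ℝ) ^ d := pow_pos (Nat.cast_pos.2 (by omega)) d
  rw [div_pow, div_mul_eq_mul_div, le_div_iff₀ hLd]
  exact_mod_cast hnat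

lemma two_mul_card_cubeF_sub_one_le {d ℓ L : ℕ} (hℓ : 0 < ℓ) (hL : 2 * ℓ < L) :
    2 * ((#(cubeF d ℓ) - 1 : ℕ) : ℝ) ≤ #(cubeF d L) := by
  suffices 2 * (#(cubeF d ℓ) - 1) ≤ #(cubeF d L) by exact_mod_cast this
  rw [card_cubeF d hℓ, card_cubeF d (by omega)]
  rcases d.eq_zero_or_pos with rfl | hd
  · simp
  calc 2 * ((2 * ((ℓ - 1) / 2) + 1) ^ d - 1) ≤ 2 ^ d * (2 * ((ℓ - 1) / 2) + 1) ^ d := by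
        gcongr
        · exact Nat.le_self_pow hd.ne' 2
        · exact Nat.sub_le _ 1
    _ ≤ (2 * ((L - 1) / 2) + 1) ^ d := by rw [← mul_pow]; gcongr; omega

theorem canonicalAvg_le_mul_integral {d : ℕ} {Λ Λ' : Finset (Fin d → ℤ)} (hΛ : Λ' ⊆ Λ) {M : ℕ}
    {ρ c : ℝ} (hρ : 0 ≤ ρ) (hc : 0 ≤ c) {μ : Measure ((Fin d → ℤ) → Bool)}
    (hμ : IsBernoulliProduct ρ μ) {f : ((Fin d → ℤ) → Bool) → ℝ}
    (hloc : ∀ η η', (∀ x ∈ Λ', η x = η' x) → f η = f η')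
    (hpos : ∀ N : ℕ, 0 ≤ canonicalAvg Λ' N f)
    (hweight : ∀ N ≤ #Λ', N ≤ M →
      ((#Λ - #Λ').choose (M - N) : ℝ) / (#Λ).choose M ≤ c * (ρ ^ N * (1 - ρ) ^ (#Λ' - N))) :
    canonicalAvg Λ M f ≤ c * ∫ η, f η ∂μ := by
  have hlocA : ∀ A : Finset (Fin d → ℤ), f (configOf A) = f (configOf (A ∩ Λ')) := fun A =>
    hloc _ _ fun x hx => by simp [configOf, hx]
  rw [canonicalAvg, card_powersetCard, sum_congr rfl fun A _ => hlocA A,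
    sum_powersetCard_inter_eq hΛ M fun B => f (configOf B), hμ.integral_eq_sum hρ hloc,
    sum_div, mul_sum _ _ c]
  refine sum_le_sum fun N hN => ?_
  have hS : 0 ≤ ∑ B ∈ Λ'.powersetCard N, f (configOf B) := by
    rw [sum_powersetCard_eq_canonicalAvg_mul]
    exact mul_nonneg (hpos N) (Nat.cast_nonneg _)
  have hbinom : 0 ≤ ρ ^ N * (1 - ρ) ^ (#Λ' - N) := by
    have := sub_nonneg.2 hμ.le_one
    positivity
  rw [mul_div_right_comm, ← mul_assoc]
  split_ifs with hNM
  · exact mul_le_mul_of_nonneg_right (hweight N (by simpa [Nat.lt_succ_iff] using hN) hNM) hS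
  · rw [zero_div, zero_mul]
    exact mul_nonneg (mul_nonneg hc hbinom) hS

theorem local_equivalence_positive_general {d : ℕ} (L ℓ : ℕ) (hℓ : 0 < ℓ)
    (hscale : 10 * ℓ ^ 2 ≤ L) (M : ℕ)
    (μ : Measure ((Fin d → ℤ) → Bool))
    (hμ : IsBernoulliProduct ((M : ℝ) / ((cubeF d L).card : ℝ)) μ)
    (f : ((Fin d → ℤ) → Bool) → ℝ)
    (hloc : ∀ η η', (∀ x ∈ cubeF d ℓ, η x = η' x) → f η = f η')
    (hpos : ∀ N : ℕ, 0 ≤ canonicalAvg (cubeF d ℓ) N f) :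
    canonicalAvg (cubeF d L) M f ≤
      (1 + 4 * ((ℓ : ℝ) ^ 2 / (L : ℝ)) ^ d) * ∫ η, f η ∂μ := by
  have h2ℓL : 2 * ℓ < L := by nlinarith
  have hsub : cubeF d ℓ ⊆ cubeF d L := cubeF_mono d (by omega)
  have hK : (0 : ℝ) < #(cubeF d L) := by
    rw [card_cubeF d (by omega)]
    positivity
  have hMK : M ≤ #(cubeF d L) := by
    have := hμ.le_one
    rwa [div_le_one hK, Nat.cast_le] at this
  refine canonicalAvg_le_mul_integral hsub (by positivity) (by positivity) hμ hloc hpos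
    fun N hNn hNM => choose_sub_div_choose_le (card_le_card hsub) hMK hNM hNn (by positivity) ?_
      (two_mul_card_cubeF_sub_one_le hℓ h2ℓL)
  linarith [card_cubeF_sub_one_le (d := d) hℓ (by omega : ℓ < L),
    Nat.cast_nonneg (α := ℝ) (#(cubeF d ℓ) - 1)]

/-- Local equivalence of ensembles, positive case (Lemma 6.9 (1)): if `10ℓ² ≤ L`,
`0 ≤ M ≤ L^d`, and `f` depends only on coordinates in `Λ_ℓ` with all its canonical
averages `⟨f⟩_{Λ_ℓ,N}` nonnegative, then
`⟨f⟩_{Λ_L,M} ≤ (1 + 4(ℓ²/L)^d) ⟨f⟩_{ρ̂}` with `ρ̂ = M/|Λ_L|`. -/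
theorem local_equivalence_positive {d : ℕ} (L ℓ : ℕ) (hL : 0 < L) (hℓ : 0 < ℓ)
    (hscale : 10 * ℓ ^ 2 ≤ L) (M : ℕ) (hM : M ≤ L ^ d)
    (μ : Measure ((Fin d → ℤ) → Bool))
    (hμ : IsBernoulliProduct ((M : ℝ) / ((cubeF d L).card : ℝ)) μ)
    (f : ((Fin d → ℤ) → Bool) → ℝ)
    (hloc : ∀ η η', (∀ x ∈ cubeF d ℓ, η x = η' x) → f η = f η')
    (hpos : ∀ N : ℕ, 0 ≤ canonicalAvg (cubeF d ℓ) N f) :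
    canonicalAvg (cubeF d L) M f ≤
      (1 + 4 * ((ℓ : ℝ) ^ 2 / (L : ℝ)) ^ d) * ∫ η, f η ∂μ :=
  local_equivalence_positive_general L ℓ hℓ hscale M μ hμ f hloc hpos
end

section
/- Let Λ ⊂ Z^d be finite and for p ∈ R^d define ν̄(ρ,Λ,p) as the infimum over v ∈ ℓ_{p,Λ⁺} + F_0(Λ⁻) of (1/(2χ(ρ)|Λ|)) Σ_{b ∈ Λ̄*} E_ρ[(1/2) c_b (π_b v)²], where 1 ≤ c_b ≤ λ, χ(ρ) = ρ(1−ρ), ℓ_{p,Λ⁺}(η) = Σ_{x∈Λ⁺}(p·x)η_x, F_0(Λ⁻) is the set of functions depending only on interior coordinates, and Λ̄* = {{x, x+e_i} : x ∈ Λ, 1 ≤ i ≤ d}. Then ν̄ is a quadratic form in p: there exists a symmetric positive matrix D̄(ρ,Λ) with Id ≤ D̄(ρ,Λ) ≤ λ·Id such that ν̄(ρ,Λ,p) = (1/2) p · D̄(ρ,Λ) p for all p. -/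
open MeasureTheory

/-- The `i`-th coordinate unit vector of `ℤᵈ`. -/
def unitVec (d : ℕ) (i : Fin d) : Fin d → ℤ := fun j => if j = i then 1 else 0

/-- The interior `Λ⁻ = Λ \ ∂Λ`. -/
def interiorF {d : ℕ} (Λ : Finset (Fin d → ℤ)) : Finset (Fin d → ℤ) :=
  Λ.filter fun x => ∀ i : Fin d, x + unitVec d i ∈ Λ ∧ x - unitVec d i ∈ Λ

/-- The enlarged set `Λ⁺ = Λ ∪ ⋃_{i=1}^d (Λ + e_i)`. -/
def plusF {d : ℕ} (Λ : Finset (Fin d → ℤ)) : Finset (Fin d → ℤ) :=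
  Λ ∪ Finset.univ.biUnion fun i : Fin d => Λ.image (· + unitVec d i)

/-- The affine function `ℓ_{p,Λ⁺}(η) = Σ_{x∈Λ⁺} (p·x) η_x`. -/
def affineFn {d : ℕ} (Λplus : Finset (Fin d → ℤ)) (p : Fin d → ℝ) :
    ((Fin d → ℤ) → Bool) → ℝ :=
  fun η => ∑ x ∈ Λplus, (∑ i, p i * (x i : ℝ)) * (if η x then (1 : ℝ) else 0)

/-- The normalized Dirichlet energy
`(1/(2χ(ρ)|Λ|)) Σ_{b∈Λ̄*} E_ρ[(1/2) c_b (π_b v)²]`, where the enlarged bond set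
`Λ̄* = {{x, x+e_i} : x ∈ Λ, 1 ≤ i ≤ d}` is indexed by pairs `(x, i)` with `x ∈ Λ`. -/
noncomputable def dirichletEnergy {d : ℕ} (ρ : ℝ) (μ : Measure ((Fin d → ℤ) → Bool))
    (c : (Fin d → ℤ) → Fin d → ((Fin d → ℤ) → Bool) → ℝ)
    (Λ : Finset (Fin d → ℤ)) (v : ((Fin d → ℤ) → Bool) → ℝ) : ℝ :=
  (1 / (2 * (ρ * (1 - ρ)) * (Λ.card : ℝ))) *
    ∑ x ∈ Λ, ∑ i : Fin d,
      ∫ η, (1 / 2) * c x i η * (v (exchange x (x + unitVec d i) η) - v η) ^ 2 ∂μ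

/-- The finite-volume quantity
`ν̄(ρ,Λ,p) = inf_{v ∈ ℓ_{p,Λ⁺} + F₀(Λ⁻)} (1/(2χ(ρ)|Λ|)) Σ_{b∈Λ̄*} E_ρ[(1/2)c_b(π_b v)²]`. -/
noncomputable def nubar {d : ℕ} (ρ : ℝ) (μ : Measure ((Fin d → ℤ) → Bool))
    (c : (Fin d → ℤ) → Fin d → ((Fin d → ℤ) → Bool) → ℝ)
    (Λ : Finset (Fin d → ℤ)) (p : Fin d → ℝ) : ℝ :=
  sInf {r : ℝ | ∃ g : ((Fin d → ℤ) → Bool) → ℝ,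
    (∀ η η', (∀ x ∈ interiorF Λ, η x = η' x) → g η = g η') ∧
    r = dirichletEnergy ρ μ c Λ (fun η => affineFn (plusF Λ) p η + g η)}

/-!
`ν̄(ρ, Λ, ·)` is the infimum of the Dirichlet energy, a nonnegative quadratic functional, over the
cosets `ℓ_p + F₀(Λ⁻)`. Such an infimum inherits the parallelogram law, and a solution of the
parallelogram law that is bounded near `0` is a quadratic form (Jordan–von Neumann).

The bounds come from comparing the rates with `1` and `λ`. For unit rates `ℓ_p` is orthogonal to
`F₀(Λ⁻)`: by exchangeability of the Bernoulli measure, `E_ρ[η_z g]` takes the same value at every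
site `z` outside `Λ⁻`, so the bond sums of the cross term telescope. Hence the unit-rate infimum is
attained at `ℓ_p` itself, where every bond contributes `χ(ρ) p_i²`, and equals `|p|² / 2`.
-/

open Filter Topology ProbabilityTheory

section Parallelogram

variable {E : Type*} [AddCommGroup E] {ν : E → ℝ}

noncomputable def polarization (ν : E → ℝ) (p q : E) : ℝ := (ν (p + q) - ν (p - q)) / 4

lemma map_zero_of_parallelogram (hpar : ∀ p q, ν (p + q) + ν (p - q) = 2 * ν p + 2 * ν q) :
    ν 0 = 0 := by
  have := hpar 0 0
  simp only [add_zero, sub_zero] at this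
  linarith

lemma map_neg_of_parallelogram (hpar : ∀ p q, ν (p + q) + ν (p - q) = 2 * ν p + 2 * ν q)
    (q : E) : ν (-q) = ν q := by
  have := hpar 0 q
  rw [zero_add, zero_sub, map_zero_of_parallelogram hpar] at this
  linarith

lemma polarization_comm (hpar : ∀ p q, ν (p + q) + ν (p - q) = 2 * ν p + 2 * ν q) (p q : E) :
    polarization ν p q = polarization ν q p := by
  rw [polarization, polarization, add_comm, ← neg_sub q p, map_neg_of_parallelogram hpar]

lemma polarization_self (hpar : ∀ p q, ν (p + q) + ν (p - q) = 2 * ν p + 2 * ν q) (p : E) :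
    polarization ν p p = ν p := by
  have := hpar p p
  rw [sub_self, map_zero_of_parallelogram hpar] at this
  rw [polarization, sub_self, map_zero_of_parallelogram hpar]
  linarith

lemma abs_polarization_le (hpar : ∀ p q, ν (p + q) + ν (p - q) = 2 * ν p + 2 * ν q)
    (hnn : ∀ p, 0 ≤ ν p) (p q : E) : |polarization ν p q| ≤ (ν p + ν q) / 2 := by
  have := hpar p q
  rw [polarization, abs_le]
  constructor <;> linarith [hnn (p + q), hnn (p - q)]

lemma polarization_add_left [Module ℝ E]
    (hpar : ∀ p q, ν (p + q) + ν (p - q) = 2 * ν p + 2 * ν q) (p p' q : E) :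
    polarization ν (p + p') q = polarization ν p q + polarization ν p' q := by
  set f : E → ℝ := fun x => ν (x + q) - ν (x - q)
  have hf : ∀ u v, f (u + v) + f (u - v) = 2 * f u := by
    intro u v
    have h₁ := hpar (u + q) v
    have h₂ := hpar (u - q) v
    simp only [f]
    rw [show u + v + q = u + q + v by abel, show u + v - q = u - q + v by abel,
      show u - v + q = u + q - v by abel, show u - v - q = u - q - v by abel]
    linarith
  have hf0 : f 0 = 0 := by simp [f, map_neg_of_parallelogram hpar]
  set u : E := (2 : ℝ)⁻¹ • (p + p')
  have h₁ := hf u ((2 : ℝ)⁻¹ • (p - p'))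
  have h₂ := hf u u
  rw [sub_self, hf0, show u + u = p + p' by simp only [u]; module] at h₂
  rw [show u + (2 : ℝ)⁻¹ • (p - p') = p by simp only [u]; module,
    show u - (2 : ℝ)⁻¹ • (p - p') = p' by simp only [u]; module] at h₁
  simp only [polarization]
  linarith

/-- Jordan–von Neumann. Boundedness near `0` stands in for the continuity that upgrades the
`ℚ`-linearity of the polarization to `ℝ`-linearity. -/
theorem exists_bilinear_of_parallelogram {E : Type*} [SeminormedAddCommGroup E] [NormedSpace ℝ E]
    {ν : E → ℝ} (hpar : ∀ p q, ν (p + q) + ν (p - q) = 2 * ν p + 2 * ν q) (hnn : ∀ p, 0 ≤ ν p)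
    (hbdd : ∃ C, ∀ᶠ p in 𝓝 0, ν p ≤ C) :
    ∃ B : E →ₗ[ℝ] E →ₗ[ℝ] ℝ, (∀ p q, B p q = B q p) ∧ ∀ p, B p p = ν p := by
  obtain ⟨C, hC⟩ := hbdd
  have hsmul : ∀ (t : ℝ) p q, polarization ν (t • p) q = t * polarization ν p q := by
    intro t p q
    let f : E →+ ℝ := AddMonoidHom.mk' (polarization ν · q) (polarization_add_left hpar · · q)
    have hf : Continuous f := by
      refine f.continuous_of_isBounded_nhds_zero hC (isBounded_iff_forall_norm_le.2
        ⟨(C + ν q) / 2, ?_⟩)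
      rintro _ ⟨p, hp, rfl⟩
      exact (abs_polarization_le hpar hnn p q).trans (by linarith [show ν p ≤ C from hp])
    exact map_real_smul f hf t p
  refine ⟨LinearMap.mk₂ ℝ (polarization ν) (polarization_add_left hpar) hsmul
    (fun p q q' => by simp only [polarization_comm hpar p]; exact polarization_add_left hpar _ _ _)
    (fun t p q => by simp only [polarization_comm hpar p]; exact hsmul _ _ _),
    polarization_comm hpar, polarization_self hpar⟩

end Parallelogram

lemma exists_symm_matrix_of_parallelogram {n : Type*} [Fintype n] [DecidableEq n]
    {ν : (n → ℝ) → ℝ} (hpar : ∀ p q, ν (p + q) + ν (p - q) = 2 * ν p + 2 * ν q)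
    (hnn : ∀ p, 0 ≤ ν p) {K : ℝ} (hK : ∀ p, ν p ≤ K * ∑ i, p i ^ 2) :
    ∃ D : n → n → ℝ, (∀ i j, D i j = D j i) ∧ ∀ p, ∑ i, p i * ∑ j, D i j * p j = ν p := by
  have hφ : Continuous fun p : n → ℝ => K * ∑ i, p i ^ 2 := by fun_prop
  obtain ⟨B, hB_symm, hB_diag⟩ := exists_bilinear_of_parallelogram hpar hnn
    ⟨1, (hφ.continuousAt.eventually_lt continuousAt_const (by simp)).mono
      fun p hp => (hK p).trans hp.le⟩
  refine ⟨LinearMap.toMatrix₂' ℝ B, fun i j => by simp only [LinearMap.toMatrix₂'_apply, hB_symm],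
    fun p => ?_⟩
  conv_rhs => rw [← hB_diag, ← Matrix.toLinearMap₂'_toMatrix' (R := ℝ) B,
    Matrix.toLinearMap₂'_apply']
  rfl

section CosetInf

variable {P V : Type*} [AddCommGroup P] [Module ℝ P] [AddCommGroup V] [Module ℝ V]
  {Q : V → ℝ} {ℓ : P →ₗ[ℝ] V} {W : Submodule ℝ V}

noncomputable def cosetInf (Q : V → ℝ) (ℓ : P →ₗ[ℝ] V) (W : Submodule ℝ V) (p : P) : ℝ :=
  sInf {r | ∃ g ∈ W, r = Q (ℓ p + g)}

lemma cosetInf_le (hQ : ∀ v, 0 ≤ Q v) (p : P) {g : V} (hg : g ∈ W) :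
    cosetInf Q ℓ W p ≤ Q (ℓ p + g) :=
  csInf_le ⟨0, by rintro _ ⟨g, -, rfl⟩; exact hQ _⟩ ⟨g, hg, rfl⟩

lemma le_cosetInf {p : P} {m : ℝ} (h : ∀ g ∈ W, m ≤ Q (ℓ p + g)) : m ≤ cosetInf Q ℓ W p :=
  le_csInf ⟨_, 0, W.zero_mem, rfl⟩ (by rintro _ ⟨g, hg, rfl⟩; exact h g hg)

lemma cosetInf_smul_le (hQ : ∀ v, 0 ≤ Q v) (hsmul : ∀ (t : ℝ) v, Q (t • v) = t ^ 2 * Q v)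
    (t : ℝ) (p : P) : cosetInf Q ℓ W (t • p) ≤ t ^ 2 * cosetInf Q ℓ W p := by
  rcases (sq_nonneg t).eq_or_lt with ht | ht
  · rw [← ht, zero_mul]
    calc cosetInf Q ℓ W (t • p) ≤ Q (ℓ (t • p) + 0) := cosetInf_le hQ _ W.zero_mem
      _ = 0 := by rw [add_zero, map_smul, hsmul, ← ht, zero_mul]
  · rw [← div_le_iff₀' ht]
    refine le_cosetInf fun g hg => ?_
    rw [div_le_iff₀' ht, ← hsmul, smul_add, ← map_smul]
    exact cosetInf_le hQ _ (W.smul_mem t hg)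

lemma cosetInf_add_add_sub_le (hQ : ∀ v, 0 ≤ Q v) {L : Submodule ℝ V} (hℓ : ∀ p, ℓ p ∈ L)
    (hW : W ≤ L) (hpar : ∀ v ∈ L, ∀ w ∈ L, Q (v + w) + Q (v - w) = 2 * Q v + 2 * Q w)
    (p q : P) :
    cosetInf Q ℓ W (p + q) + cosetInf Q ℓ W (p - q)
      ≤ 2 * cosetInf Q ℓ W p + 2 * cosetInf Q ℓ W q := by
  suffices h : ∀ g ∈ W, ∀ g' ∈ W, cosetInf Q ℓ W (p + q) + cosetInf Q ℓ W (p - q)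
      ≤ 2 * Q (ℓ p + g) + 2 * Q (ℓ q + g') by
    have h' : ∀ g' ∈ W, (cosetInf Q ℓ W (p + q) + cosetInf Q ℓ W (p - q) - 2 * Q (ℓ q + g')) / 2
        ≤ cosetInf Q ℓ W p := fun g' hg' =>
      le_cosetInf fun g hg => by linarith [h g hg g' hg']
    have := le_cosetInf (p := q) fun g' hg' => (show
      (cosetInf Q ℓ W (p + q) + cosetInf Q ℓ W (p - q) - 2 * cosetInf Q ℓ W p) / 2 ≤ Q (ℓ q + g') by
        linarith [h' g' hg'])
    linarith
  intro g hg g' hg'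
  have h₁ := cosetInf_le hQ (ℓ := ℓ) (p + q) (W.add_mem hg hg')
  have h₂ := cosetInf_le hQ (ℓ := ℓ) (p - q) (W.sub_mem hg hg')
  have h₃ := hpar _ (L.add_mem (hℓ p) (hW hg)) _ (L.add_mem (hℓ q) (hW hg'))
  rw [map_add, show ℓ p + ℓ q + (g + g') = ℓ p + g + (ℓ q + g') by abel] at h₁
  rw [map_sub, show ℓ p - ℓ q + (g - g') = ℓ p + g - (ℓ q + g') by abel] at h₂
  linarith

theorem cosetInf_parallelogram (hQ : ∀ v, 0 ≤ Q v) (hsmul : ∀ (t : ℝ) v, Q (t • v) = t ^ 2 * Q v)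
    {L : Submodule ℝ V} (hℓ : ∀ p, ℓ p ∈ L) (hW : W ≤ L)
    (hpar : ∀ v ∈ L, ∀ w ∈ L, Q (v + w) + Q (v - w) = 2 * Q v + 2 * Q w) (p q : P) :
    cosetInf Q ℓ W (p + q) + cosetInf Q ℓ W (p - q)
      = 2 * cosetInf Q ℓ W p + 2 * cosetInf Q ℓ W q := by
  have hdouble : ∀ p : P, cosetInf Q ℓ W ((2 : ℝ) • p) = 4 * cosetInf Q ℓ W p := by
    intro p
    have h₁ := cosetInf_smul_le (ℓ := ℓ) (W := W) hQ hsmul 2 p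
    have h₂ := cosetInf_smul_le (ℓ := ℓ) (W := W) hQ hsmul 2⁻¹ ((2 : ℝ) • p)
    rw [inv_smul_smul₀ two_ne_zero] at h₂
    linarith
  have h₁ := cosetInf_add_add_sub_le hQ hℓ hW hpar p q
  have h₂ := cosetInf_add_add_sub_le hQ hℓ hW hpar (p + q) (p - q)
  rw [show p + q + (p - q) = (2 : ℝ) • p by module, show p + q - (p - q) = (2 : ℝ) • q by module,
    hdouble, hdouble] at h₂
  linarith

end CosetInf

abbrev Config (d : ℕ) := (Fin d → ℤ) → Bool

section Locality

variable {ι α : Type*}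

lemma DependsOn.map₂ {β γ δ : Type*} {f : (ι → α) → β} {g : (ι → α) → γ} {s : Set ι}
    (hf : DependsOn f s) (hg : DependsOn g s) (op : β → γ → δ) :
    DependsOn (fun η => op (f η) (g η)) s :=
  fun _ _ h => congrArg₂ op (hf h) (hg h)

lemma DependsOn.map {β γ : Type*} {f : (ι → α) → β} {s : Set ι} (hf : DependsOn f s)
    (φ : β → γ) : DependsOn (fun η => φ (f η)) s :=
  fun _ _ h => congrArg φ (hf h)

variable [MeasurableSpace α] [Finite α] [MeasurableSingletonClass α] {f : (ι → α) → ℝ}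
  {s : Finset ι}

lemma DependsOn.measurable_of_finset (hf : DependsOn f s) : Measurable f := by
  obtain ⟨G, rfl⟩ := dependsOn_iff_exists_comp.1 hf
  exact (measurable_of_finite G).comp (by fun_prop)

lemma DependsOn.integrable_of_finset {μ : Measure (ι → α)} [IsFiniteMeasure μ]
    (hf : DependsOn f s) : Integrable f μ := by
  obtain ⟨G, rfl⟩ := dependsOn_iff_exists_comp.1 hf
  obtain ⟨C, hC⟩ := (Set.finite_range fun b => ‖G b‖).bddAbove
  exact .of_bound hf.measurable_of_finset.aestronglyMeasurable C
    (ae_of_all _ fun η => hC ⟨_, rfl⟩)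

end Locality

section

variable {d : ℕ}

def site (z : Fin d → ℤ) (η : Config d) : ℝ := if η z then 1 else 0

lemma dependsOn_site {z : Fin d → ℤ} {s : Set (Fin d → ℤ)} (hz : z ∈ s) :
    DependsOn (site z) s :=
  fun _ _ h => by rw [site, site, h z hz]

lemma exchange_apply_left (x y : Fin d → ℤ) (η : Config d) : exchange x y η x = η y := if_pos rfl

lemma exchange_apply_right (x y : Fin d → ℤ) (η : Config d) : exchange x y η y = η x := by
  by_cases h : y = x
  · subst h; exact if_pos rfl
  · simp [exchange, h]

lemma exchange_apply_of_ne {x y z : Fin d → ℤ} (hx : z ≠ x) (hy : z ≠ y) (η : Config d) :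
    exchange x y η z = η z := by
  simp [exchange, hx, hy]

lemma DependsOn.comp_exchange {β : Type*} {f : Config d → β} {s : Set (Fin d → ℤ)}
    (hf : DependsOn f s) {x y : Fin d → ℤ} (hx : x ∈ s) (hy : y ∈ s) :
    DependsOn (fun η => f (exchange x y η)) s := by
  intro η η' h
  refine hf fun z hz => ?_
  simp only [exchange]
  split_ifs
  exacts [h y hy, h x hx, h z hz]

lemma DependsOn.comp_exchange_of_notMem {β : Type*} {f : Config d → β} {s : Set (Fin d → ℤ)}
    (hf : DependsOn f s) {x y : Fin d → ℤ} (hx : x ∉ s) (hy : y ∉ s) (η : Config d) :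
    f (exchange x y η) = f η :=
  hf fun _ hz => exchange_apply_of_ne (ne_of_mem_of_not_mem hz hx) (ne_of_mem_of_not_mem hz hy) η

lemma bernoulliMeasure_singleton {ρ : ℝ} (hρ : ρ ∈ Set.Icc 0 1) (b : Bool) :
    Ber(true, false, (⟨ρ, hρ⟩ : unitInterval)) {b} = ENNReal.ofReal (if b then ρ else 1 - ρ) := by
  cases b
  · rw [if_neg Bool.false_ne_true,
      bernoulliMeasure_apply_of_notMem_of_mem _ (measurableSet_singleton _) (by simp) rfl,
      ENNReal.ofReal, Real.toNNReal_of_nonneg (sub_nonneg.2 hρ.2)]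
    rfl
  · rw [if_pos rfl,
      bernoulliMeasure_apply_of_mem_of_notMem _ (measurableSet_singleton _) rfl (by simp),
      ENNReal.ofReal, Real.toNNReal_of_nonneg hρ.1]
    rfl

theorem IsBernoulliProduct.eq_infinitePi {ρ : ℝ} {μ : Measure (Config d)}
    (hμ : IsBernoulliProduct ρ μ) (hρ : ρ ∈ Set.Icc 0 1) :
    μ = Measure.infinitePi fun _ => Ber(true, false, (⟨ρ, hρ⟩ : unitInterval)) := by
  classical
  refine IsProjectiveLimit.unique (fun s => Measure.ext_of_singleton fun b => ?_)
    (Measure.isProjectiveLimit_infinitePi _)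
  let η₀ : Config d := fun x => if hx : x ∈ s then b ⟨x, hx⟩ else false
  have hpre : (s.restrict (π := fun _ => Bool)) ⁻¹' {b} = {η : Config d | ∀ x ∈ s, η x = η₀ x} := by
    ext η
    simp +contextual [η₀, funext_iff]
  rw [Measure.map_apply (by fun_prop) (measurableSet_singleton b), hpre, hμ.2, Measure.pi_singleton,
    ← Finset.prod_coe_sort s]
  refine Finset.prod_congr rfl fun x _ => ?_
  simp [η₀, bernoulliMeasure_singleton]

lemma exchange_eq_piCongrLeft (x y : Fin d → ℤ) :
    exchange x y = MeasurableEquiv.piCongrLeft (fun _ => Bool) (Equiv.swap x y) := by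
  ext η z
  simp only [exchange, MeasurableEquiv.coe_piCongrLeft, Equiv.piCongrLeft_apply_eq_cast,
    Equiv.symm_swap, cast_eq, Equiv.swap_apply_def]
  split_ifs <;> rfl

lemma integral_comp_exchange {ρ : ℝ} {μ : Measure (Config d)}
    (hμ : IsBernoulliProduct ρ μ) (hρ : ρ ∈ Set.Icc 0 1) (x y : Fin d → ℤ) (f : Config d → ℝ) :
    ∫ η, f (exchange x y η) ∂μ = ∫ η, f η ∂μ := by
  have h := Measure.infinitePi_map_piCongrLeft
    (fun _ : Fin d → ℤ => Ber(true, false, (⟨ρ, hρ⟩ : unitInterval))) (Equiv.swap x y)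
  rw [← hμ.eq_infinitePi hρ] at h
  rw [exchange_eq_piCongrLeft]
  exact MeasurePreserving.integral_comp ⟨by fun_prop, h⟩ (MeasurableEquiv.measurableEmbedding _) f

lemma integral_prod_site {ρ : ℝ} {μ : Measure (Config d)} (hμ : IsBernoulliProduct ρ μ)
    (hρ : 0 ≤ ρ) (s : Finset (Fin d → ℤ)) : ∫ η, ∏ z ∈ s, site z η ∂μ = ρ ^ s.card := by
  have hind : (fun η => ∏ z ∈ s, site z η) = {η : Config d | ∀ z ∈ s, η z = true}.indicator 1 := by
    ext η
    simp [site, Finset.prod_boole, Set.indicator_apply]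
  have hmeas : MeasurableSet {η : Config d | ∀ z ∈ s, η z = true} := by
    simp only [Set.ofPred_forall]
    exact Finset.measurableSet_biInter s fun z _ => measurableSet_eq_fun (by fun_prop) (by fun_prop)
  have hcyl := hμ.2 s fun _ => true
  simp only [if_true] at hcyl
  rw [hind, integral_indicator_one hmeas, measureReal_def, hcyl, ENNReal.toReal_prod]
  simp [ENNReal.toReal_ofReal hρ]

lemma integral_site_sub_site_sq {ρ : ℝ} {μ : Measure (Config d)} (hμ : IsBernoulliProduct ρ μ)
    (hρ : 0 ≤ ρ) {x y : Fin d → ℤ} (hxy : x ≠ y) :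
    ∫ η, (site x η - site y η) ^ 2 ∂μ = 2 * (ρ * (1 - ρ)) := by
  have : IsProbabilityMeasure μ := hμ.1
  have hsq : ∀ η, (site x η - site y η) ^ 2
      = ∏ z ∈ {x}, site z η + ∏ z ∈ {y}, site z η - 2 * ∏ z ∈ {x, y}, site z η := by
    intro η
    rw [Finset.prod_singleton, Finset.prod_singleton, Finset.prod_pair hxy]
    unfold site
    cases η x <;> cases η y <;> norm_num
  have hint : ∀ s : Finset (Fin d → ℤ), Integrable (fun η => ∏ z ∈ s, site z η) μ := fun s =>
    DependsOn.integrable_of_finset (s := s) fun η η' h =>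
      Finset.prod_congr rfl fun z hz => dependsOn_site (Finset.mem_coe.2 hz) h
  simp_rw [hsq]
  have hxy_int : Integrable (fun η => ∏ z ∈ {x}, site z η + ∏ z ∈ {y}, site z η) μ :=
    (hint _).add (hint _)
  rw [integral_sub hxy_int ((hint _).const_mul 2), integral_add (hint _) (hint _),
    integral_const_mul, integral_prod_site hμ hρ, integral_prod_site hμ hρ,
    integral_prod_site hμ hρ, Finset.card_pair hxy]
  simp only [Finset.card_singleton, pow_one]
  ring

section Geometry

variable {Λ : Finset (Fin d → ℤ)}

lemma subset_plusF : Λ ⊆ plusF Λ := Finset.subset_union_left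

lemma add_unitVec_mem_plusF {x : Fin d → ℤ} (hx : x ∈ Λ) (i : Fin d) :
    x + unitVec d i ∈ plusF Λ :=
  Finset.mem_union_right _
    (Finset.mem_biUnion.2 ⟨i, Finset.mem_univ i, Finset.mem_image_of_mem _ hx⟩)

lemma interiorF_subset : interiorF Λ ⊆ Λ := Finset.filter_subset _ _

lemma interiorF_subset_image_add_unitVec (i : Fin d) :
    interiorF Λ ⊆ Λ.image (· + unitVec d i) := fun z hz =>
  Finset.mem_image.2 ⟨z - unitVec d i, ((Finset.mem_filter.1 hz).2 i).2, sub_add_cancel _ _⟩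

lemma ne_add_unitVec (x : Fin d → ℤ) (i : Fin d) : x ≠ x + unitVec d i := by
  simp [funext_iff, unitVec]

lemma Finset.sum_eq_sum_of_card_eq {α M : Type*} [DecidableEq α] [AddCommMonoid M]
    {A B S : Finset α} {h : α → M} (hA : S ⊆ A) (hB : S ⊆ B) (hcard : A.card = B.card)
    (hh : ∀ z ∉ S, ∀ z' ∉ S, h z = h z') : ∑ z ∈ A, h z = ∑ z ∈ B, h z := by
  rw [← Finset.sum_sdiff hA, ← Finset.sum_sdiff hB]
  congr 1
  have hcard' : (A \ S).card = (B \ S).card := by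
    rw [Finset.card_sdiff_of_subset hA, Finset.card_sdiff_of_subset hB, hcard]
  rcases (A \ S).eq_empty_or_nonempty with h0 | ⟨z₀, hz₀⟩
  · rw [h0, Finset.card_eq_zero.1 (hcard'.symm.trans (by rw [h0, Finset.card_empty]))]
  · have hk : ∀ z ∉ S, h z = h z₀ := fun z hz => hh z hz z₀ (Finset.mem_sdiff.1 hz₀).2
    rw [Finset.sum_congr rfl fun z hz => hk z (Finset.mem_sdiff.1 hz).2,
      Finset.sum_congr rfl fun z hz => hk z (Finset.mem_sdiff.1 hz).2, Finset.sum_const,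
      Finset.sum_const, hcard']

/-- Translating `Λ` by a unit vector moves only sites outside the interior. -/
lemma sum_add_unitVec_eq {M : Type*} [AddCommMonoid M] {h : (Fin d → ℤ) → M}
    (hh : ∀ z ∉ interiorF Λ, ∀ z' ∉ interiorF Λ, h z = h z') (i : Fin d) :
    ∑ x ∈ Λ, h (x + unitVec d i) = ∑ x ∈ Λ, h x := by
  classical
  rw [← Finset.sum_image fun _ _ _ _ => add_right_cancel]
  exact Finset.sum_eq_sum_of_card_eq (interiorF_subset_image_add_unitVec i) interiorF_subset
    (Finset.card_image_of_injective _ (add_left_injective _)) hh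

end Geometry

/-- The space `F₀(s)` of the paper. -/
def dependsOnSubmodule (s : Set (Fin d → ℤ)) : Submodule ℝ (Config d → ℝ) where
  carrier := {f | DependsOn f s}
  add_mem' hf hg := hf.map₂ hg (· + ·)
  zero_mem' := fun _ _ _ => rfl
  smul_mem' t _ hf := fun _ _ h => congrArg (t * ·) (hf h)

lemma dependsOnSubmodule_mono {s t : Set (Fin d → ℤ)} (hst : s ⊆ t) :
    dependsOnSubmodule (d := d) s ≤ dependsOnSubmodule t :=
  fun _ hf => hf.mono hst

def affineFnₗ (Λplus : Finset (Fin d → ℤ)) : (Fin d → ℝ) →ₗ[ℝ] (Config d → ℝ) where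
  toFun := affineFn Λplus
  map_add' p q := by
    ext η
    simp only [affineFn, Pi.add_apply, add_mul, Finset.sum_add_distrib]
  map_smul' t p := by
    ext η
    simp only [affineFn, Pi.smul_apply, smul_eq_mul, RingHom.id_apply, Finset.mul_sum,
      Finset.sum_mul, mul_assoc]

lemma affineFnₗ_apply (Λplus : Finset (Fin d → ℤ)) (p : Fin d → ℝ) :
    affineFnₗ Λplus p = affineFn Λplus p := rfl

lemma affineFn_mem_dependsOnSubmodule (Λplus : Finset (Fin d → ℤ)) (p : Fin d → ℝ) :
    affineFn Λplus p ∈ dependsOnSubmodule (d := d) Λplus :=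
  fun _ _ h => Finset.sum_congr rfl fun x hx => by rw [h x hx]

/-- The gradient `π_b v` across the bond `b = {x, x + e_i}`. -/
def bondGrad (v : Config d → ℝ) (x : Fin d → ℤ) (i : Fin d) (η : Config d) : ℝ :=
  v (exchange x (x + unitVec d i) η) - v η

lemma affineFn_exchange_sub {Λplus : Finset (Fin d → ℤ)} {x y : Fin d → ℤ} (hxy : x ≠ y)
    (hx : x ∈ Λplus) (hy : y ∈ Λplus) (p : Fin d → ℝ) (η : Config d) :
    affineFn Λplus p (exchange x y η) - affineFn Λplus p η
      = (∑ j, p j * (y j : ℝ) - ∑ j, p j * (x j : ℝ)) * (site x η - site y η) := by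
  have hsub : {x, y} ⊆ Λplus := Finset.insert_subset hx (Finset.singleton_subset_iff.2 hy)
  have hsum : affineFn Λplus p (exchange x y η) - affineFn Λplus p η
      = ∑ z ∈ Λplus, (∑ j, p j * (z j : ℝ)) * (site z (exchange x y η) - site z η) := by
    simp only [affineFn, site, ← Finset.sum_sub_distrib, ← mul_sub]
  rw [hsum, ← Finset.sum_subset hsub fun z _ hz => ?_, Finset.sum_pair hxy]
  · simp only [site, exchange_apply_left, exchange_apply_right]
    ring
  · simp only [Finset.mem_insert, Finset.mem_singleton, not_or] at hz
    rw [site, exchange_apply_of_ne hz.1 hz.2, ← site, sub_self, mul_zero]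

lemma bondGrad_affineFn {Λplus : Finset (Fin d → ℤ)} {x : Fin d → ℤ} {i : Fin d}
    (hx : x ∈ Λplus) (hy : x + unitVec d i ∈ Λplus) (p : Fin d → ℝ) (η : Config d) :
    bondGrad (affineFn Λplus p) x i η = p i * (site x η - site (x + unitVec d i) η) := by
  rw [bondGrad, affineFn_exchange_sub (ne_add_unitVec x i) hx hy]
  congr 1
  simp [unitVec, mul_add, Finset.sum_add_distrib]

section Energy

variable {ρ : ℝ} {μ : Measure (Config d)} {c : (Fin d → ℤ) → Fin d → Config d → ℝ}
  {Λ : Finset (Fin d → ℤ)}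

noncomputable def dirichletForm (ρ : ℝ) (μ : Measure (Config d))
    (c : (Fin d → ℤ) → Fin d → Config d → ℝ) (Λ : Finset (Fin d → ℤ))
    (v w : Config d → ℝ) : ℝ :=
  (1 / (2 * (ρ * (1 - ρ)) * (Λ.card : ℝ))) *
    ∑ x ∈ Λ, ∑ i : Fin d, ∫ η, 1 / 2 * c x i η * (bondGrad v x i η * bondGrad w x i η) ∂μ

lemma dirichletEnergy_eq_sum_bondGrad (v : Config d → ℝ) :
    dirichletEnergy ρ μ c Λ v = (1 / (2 * (ρ * (1 - ρ)) * (Λ.card : ℝ))) *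
      ∑ x ∈ Λ, ∑ i : Fin d, ∫ η, 1 / 2 * c x i η * bondGrad v x i η ^ 2 ∂μ := rfl

lemma bondGrad_mem_dependsOnSubmodule {v : Config d → ℝ} (hv : v ∈ dependsOnSubmodule (plusF Λ))
    {x : Fin d → ℤ} (hx : x ∈ Λ) (i : Fin d) :
    bondGrad v x i ∈ dependsOnSubmodule (plusF Λ) :=
  (hv.comp_exchange (subset_plusF hx) (add_unitVec_mem_plusF hx i)).map₂ hv (· - ·)

lemma bondGrad_add_smul (v w : Config d → ℝ) (t : ℝ) (x : Fin d → ℤ) (i : Fin d) (η : Config d) :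
    bondGrad (v + t • w) x i η = bondGrad v x i η + t * bondGrad w x i η := by
  simp only [bondGrad, Pi.add_apply, Pi.smul_apply, smul_eq_mul]
  ring

lemma integral_mul_add_mul_sq {α : Type*} [MeasurableSpace α] {ν : Measure α} {a f g : α → ℝ}
    (hff : Integrable (fun x => a x * f x ^ 2) ν) (hfg : Integrable (fun x => a x * (f x * g x)) ν)
    (hgg : Integrable (fun x => a x * g x ^ 2) ν) (t : ℝ) :
    ∫ x, a x * (f x + t * g x) ^ 2 ∂ν
      = ∫ x, a x * f x ^ 2 ∂ν + 2 * t * ∫ x, a x * (f x * g x) ∂ν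
        + t ^ 2 * ∫ x, a x * g x ^ 2 ∂ν := by
  have h : ∀ x, a x * (f x + t * g x) ^ 2
      = a x * f x ^ 2 + 2 * t * (a x * (f x * g x)) + t ^ 2 * (a x * g x ^ 2) := fun x => by ring
  have hfg' : Integrable (fun x => 2 * t * (a x * (f x * g x))) ν := hfg.const_mul _
  have hsum : Integrable (fun x => a x * f x ^ 2 + 2 * t * (a x * (f x * g x))) ν := hff.add hfg'
  simp_rw [h]
  rw [integral_add hsum (hgg.const_mul _), integral_add hff hfg', integral_const_mul,
    integral_const_mul]

lemma integrable_rate_mul [IsFiniteMeasure μ] {K : ℝ} (hc_meas : ∀ x i, Measurable (c x i))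
    (hc_bdd : ∀ x i η, |c x i η| ≤ K) {f : Config d → ℝ} {s : Finset (Fin d → ℤ)}
    (hf : DependsOn f s) (x : Fin d → ℤ) (i : Fin d) :
    Integrable (fun η => 1 / 2 * c x i η * f η) μ :=
  hf.integrable_of_finset.bdd_mul (c := K) (by fun_prop) (ae_of_all _ fun η => by
    rw [Real.norm_eq_abs, abs_mul]
    nlinarith [abs_nonneg (c x i η), hc_bdd x i η, abs_of_pos (one_half_pos (α := ℝ))])

lemma dirichletEnergy_add_smul [IsFiniteMeasure μ] {K : ℝ} (hc_meas : ∀ x i, Measurable (c x i))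
    (hc_bdd : ∀ x i η, |c x i η| ≤ K) {v w : Config d → ℝ}
    (hv : v ∈ dependsOnSubmodule (plusF Λ)) (hw : w ∈ dependsOnSubmodule (plusF Λ)) (t : ℝ) :
    dirichletEnergy ρ μ c Λ (v + t • w)
      = dirichletEnergy ρ μ c Λ v + 2 * t * dirichletForm ρ μ c Λ v w
        + t ^ 2 * dirichletEnergy ρ μ c Λ w := by
  have hbond : ∀ x ∈ Λ, ∀ i, ∫ η, 1 / 2 * c x i η * bondGrad (v + t • w) x i η ^ 2 ∂μ
      = ∫ η, 1 / 2 * c x i η * bondGrad v x i η ^ 2 ∂μ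
        + 2 * t * ∫ η, 1 / 2 * c x i η * (bondGrad v x i η * bondGrad w x i η) ∂μ
        + t ^ 2 * ∫ η, 1 / 2 * c x i η * bondGrad w x i η ^ 2 ∂μ := by
    intro x hx i
    have hv' := bondGrad_mem_dependsOnSubmodule hv hx i
    have hw' := bondGrad_mem_dependsOnSubmodule hw hx i
    simp_rw [bondGrad_add_smul]
    exact integral_mul_add_mul_sq (integrable_rate_mul hc_meas hc_bdd (hv'.map (· ^ 2)) x i)
      (integrable_rate_mul hc_meas hc_bdd (hv'.map₂ hw' (· * ·)) x i)
      (integrable_rate_mul hc_meas hc_bdd (hw'.map (· ^ 2)) x i) t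
  simp only [dirichletEnergy_eq_sum_bondGrad, dirichletForm]
  rw [Finset.sum_congr rfl fun x hx => Finset.sum_congr rfl fun i _ => hbond x hx i]
  simp only [Finset.sum_add_distrib, ← Finset.mul_sum]
  ring

lemma dirichletEnergy_smul (t : ℝ) (v : Config d → ℝ) :
    dirichletEnergy ρ μ c Λ (t • v) = t ^ 2 * dirichletEnergy ρ μ c Λ v := by
  have h : ∀ x i η, 1 / 2 * c x i η * bondGrad (t • v) x i η ^ 2
      = t ^ 2 * (1 / 2 * c x i η * bondGrad v x i η ^ 2) := fun x i η => by
    simp only [bondGrad, Pi.smul_apply, smul_eq_mul]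
    ring
  simp only [dirichletEnergy_eq_sum_bondGrad, h, integral_const_mul, ← Finset.mul_sum]
  ring

lemma dirichletEnergy_nonneg (hρ : ρ ∈ Set.Icc 0 1) (hc : ∀ x i η, 0 ≤ c x i η)
    (v : Config d → ℝ) : 0 ≤ dirichletEnergy ρ μ c Λ v := by
  have : 0 ≤ ρ * (1 - ρ) := mul_nonneg hρ.1 (sub_nonneg.2 hρ.2)
  exact mul_nonneg (by positivity) (Finset.sum_nonneg fun x _ => Finset.sum_nonneg fun i _ =>
    integral_nonneg fun η => by have := hc x i η; positivity)

lemma dirichletEnergy_parallelogram [IsFiniteMeasure μ] {K : ℝ}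
    (hc_meas : ∀ x i, Measurable (c x i)) (hc_bdd : ∀ x i η, |c x i η| ≤ K) {v w : Config d → ℝ}
    (hv : v ∈ dependsOnSubmodule (plusF Λ)) (hw : w ∈ dependsOnSubmodule (plusF Λ)) :
    dirichletEnergy ρ μ c Λ (v + w) + dirichletEnergy ρ μ c Λ (v - w)
      = 2 * dirichletEnergy ρ μ c Λ v + 2 * dirichletEnergy ρ μ c Λ w := by
  have h₁ := dirichletEnergy_add_smul (ρ := ρ) (μ := μ) hc_meas hc_bdd hv hw 1
  have h₂ := dirichletEnergy_add_smul (ρ := ρ) (μ := μ) hc_meas hc_bdd hv hw (-1)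
  rw [one_smul] at h₁
  rw [neg_one_smul, ← sub_eq_add_neg] at h₂
  linarith

lemma dirichletEnergy_one_le [IsFiniteMeasure μ] {K : ℝ} (hρ : ρ ∈ Set.Icc 0 1)
    (hc_meas : ∀ x i, Measurable (c x i)) (hc_bdd : ∀ x i η, |c x i η| ≤ K)
    (hc_one : ∀ x i η, 1 ≤ c x i η) {v : Config d → ℝ} (hv : v ∈ dependsOnSubmodule (plusF Λ)) :
    dirichletEnergy ρ μ (fun _ _ _ => 1) Λ v ≤ dirichletEnergy ρ μ c Λ v := by
  have : 0 ≤ ρ * (1 - ρ) := mul_nonneg hρ.1 (sub_nonneg.2 hρ.2)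
  refine mul_le_mul_of_nonneg_left (Finset.sum_le_sum fun x hx => Finset.sum_le_sum fun i _ => ?_)
    (by positivity)
  refine integral_mono_of_nonneg (ae_of_all _ fun η => by positivity)
    (integrable_rate_mul hc_meas hc_bdd ((bondGrad_mem_dependsOnSubmodule hv hx i).map (· ^ 2)) x i)
    (ae_of_all _ fun η => ?_)
  have := hc_one x i η
  dsimp only
  gcongr

lemma dirichletEnergy_le_mul_one [IsFiniteMeasure μ] {K : ℝ} (hρ : ρ ∈ Set.Icc 0 1)
    (hc_nonneg : ∀ x i η, 0 ≤ c x i η) (hc_le : ∀ x i η, c x i η ≤ K) {v : Config d → ℝ}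
    (hv : v ∈ dependsOnSubmodule (plusF Λ)) :
    dirichletEnergy ρ μ c Λ v ≤ K * dirichletEnergy ρ μ (fun _ _ _ => 1) Λ v := by
  have : 0 ≤ ρ * (1 - ρ) := mul_nonneg hρ.1 (sub_nonneg.2 hρ.2)
  have hbond : ∀ x ∈ Λ, ∀ i, ∫ η, 1 / 2 * c x i η * bondGrad v x i η ^ 2 ∂μ
      ≤ K * ∫ η, 1 / 2 * 1 * bondGrad v x i η ^ 2 ∂μ := by
    intro x hx i
    rw [← integral_const_mul]
    refine integral_mono_of_nonneg (ae_of_all _ fun η => by have := hc_nonneg x i η; positivity)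
      (((bondGrad_mem_dependsOnSubmodule hv hx i).map fun r => 1 / 2 * 1 * r ^ 2)
        |>.integrable_of_finset.const_mul K) (ae_of_all _ fun η => ?_)
    have := hc_le x i η
    dsimp only
    nlinarith [sq_nonneg (bondGrad v x i η)]
  calc dirichletEnergy ρ μ c Λ v
      ≤ 1 / (2 * (ρ * (1 - ρ)) * (Λ.card : ℝ)) *
          ∑ x ∈ Λ, ∑ i : Fin d, K * ∫ η, 1 / 2 * 1 * bondGrad v x i η ^ 2 ∂μ := by
        rw [dirichletEnergy_eq_sum_bondGrad]
        gcongr with x hx i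
        exact hbond x hx i
    _ = K * dirichletEnergy ρ μ (fun _ _ _ => 1) Λ v := by
        simp only [dirichletEnergy_eq_sum_bondGrad, ← Finset.mul_sum]
        ring

lemma dirichletEnergy_one_affineFn (hμ : IsBernoulliProduct ρ μ) (hρ : ρ ∈ Set.Ioo 0 1)
    (hΛ : Λ.Nonempty) (p : Fin d → ℝ) :
    dirichletEnergy ρ μ (fun _ _ _ => 1) Λ (affineFn (plusF Λ) p) = 1 / 2 * ∑ i, p i ^ 2 := by
  have hbond : ∀ x ∈ Λ, ∀ i, ∫ η, 1 / 2 * 1 * bondGrad (affineFn (plusF Λ) p) x i η ^ 2 ∂μ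
      = ρ * (1 - ρ) * p i ^ 2 := by
    intro x hx i
    simp_rw [bondGrad_affineFn (subset_plusF hx) (add_unitVec_mem_plusF hx i), mul_pow,
      ← mul_assoc]
    rw [integral_const_mul, integral_site_sub_site_sq hμ hρ.1.le (ne_add_unitVec x i)]
    ring
  have hχ : 0 < ρ * (1 - ρ) := mul_pos hρ.1 (sub_pos.2 hρ.2)
  have hN : (0 : ℝ) < Λ.card := Nat.cast_pos.2 (Finset.card_pos.2 hΛ)
  rw [dirichletEnergy_eq_sum_bondGrad, Finset.sum_congr rfl fun x hx =>
    Finset.sum_congr rfl fun i _ => hbond x hx i]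
  simp only [← Finset.mul_sum, Finset.sum_const, nsmul_eq_mul]
  field_simp
  exact mul_div_cancel_left₀ _ hχ.ne'

lemma integral_site_mul_eq_of_notMem (hμ : IsBernoulliProduct ρ μ) (hρ : ρ ∈ Set.Icc 0 1)
    {g : Config d → ℝ} {s : Set (Fin d → ℤ)} (hg : DependsOn g s) {z z' : Fin d → ℤ}
    (hz : z ∉ s) (hz' : z' ∉ s) :
    ∫ η, site z η * g η ∂μ = ∫ η, site z' η * g η ∂μ := by
  rw [← integral_comp_exchange hμ hρ z z']
  simp only [hg.comp_exchange_of_notMem hz hz', site, exchange_apply_left]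

lemma integral_bondGrad_affineFn_mul (hμ : IsBernoulliProduct ρ μ) (hρ : ρ ∈ Set.Icc 0 1)
    {x : Fin d → ℤ} (hx : x ∈ Λ) (i : Fin d) {g : Config d → ℝ}
    (hg : g ∈ dependsOnSubmodule (plusF Λ)) (p : Fin d → ℝ) :
    ∫ η, bondGrad (affineFn (plusF Λ) p) x i η * bondGrad g x i η ∂μ
      = 2 * p i * (∫ η, site (x + unitVec d i) η * g η ∂μ - ∫ η, site x η * g η ∂μ) := by
  have : IsProbabilityMeasure μ := hμ.1
  have hx' := subset_plusF hx
  have hy' := add_unitVec_mem_plusF hx i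
  set F : Config d → ℝ := fun η => (site (x + unitVec d i) η - site x η) * g η with hF_def
  have hF : DependsOn F (plusF Λ) :=
    ((dependsOn_site hy').map₂ (dependsOn_site hx') (· - ·)).map₂ hg (· * ·)
  have hpt : ∀ η, bondGrad (affineFn (plusF Λ) p) x i η * bondGrad g x i η
      = p i * (F (exchange x (x + unitVec d i) η) + F η) := by
    intro η
    rw [bondGrad_affineFn hx' hy', bondGrad]
    simp only [hF_def, site, exchange_apply_left, exchange_apply_right]
    ring
  simp_rw [hpt]
  rw [integral_const_mul, integral_add (hF.comp_exchange hx' hy').integrable_of_finset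
    hF.integrable_of_finset, integral_comp_exchange hμ hρ x (x + unitVec d i) F, hF_def]
  simp_rw [sub_mul]
  rw [integral_sub (((dependsOn_site hy').map₂ hg (· * ·)).integrable_of_finset)
    (((dependsOn_site hx').map₂ hg (· * ·)).integrable_of_finset)]
  ring

lemma dirichletForm_one_affineFn_eq_zero (hμ : IsBernoulliProduct ρ μ) (hρ : ρ ∈ Set.Icc 0 1)
    {g : Config d → ℝ} (hg : g ∈ dependsOnSubmodule (interiorF Λ)) (p : Fin d → ℝ) :
    dirichletForm ρ μ (fun _ _ _ => 1) Λ (affineFn (plusF Λ) p) g = 0 := by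
  have hg' : g ∈ dependsOnSubmodule (plusF Λ) :=
    dependsOnSubmodule_mono (Finset.coe_subset.2 (interiorF_subset.trans subset_plusF)) hg
  set h : (Fin d → ℤ) → ℝ := fun z => ∫ η, site z η * g η ∂μ
  have hh : ∀ z ∉ interiorF Λ, ∀ z' ∉ interiorF Λ, h z = h z' := fun z hz z' hz' =>
    integral_site_mul_eq_of_notMem hμ hρ hg hz hz'
  have hbond : ∀ x ∈ Λ, ∀ i, ∫ η, 1 / 2 * 1 *
      (bondGrad (affineFn (plusF Λ) p) x i η * bondGrad g x i η) ∂μ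
      = p i * (h (x + unitVec d i) - h x) := by
    intro x hx i
    rw [integral_const_mul, integral_bondGrad_affineFn_mul hμ hρ hx i hg' p]
    ring
  rw [dirichletForm, Finset.sum_congr rfl fun x hx => Finset.sum_congr rfl fun i _ => hbond x hx i,
    Finset.sum_comm]
  simp only [← Finset.mul_sum, Finset.sum_sub_distrib, sum_add_unitVec_eq hh, sub_self, mul_zero,
    Finset.sum_const_zero]

lemma le_dirichletEnergy_affineFn_add (hμ : IsBernoulliProduct ρ μ) (hρ : ρ ∈ Set.Ioo 0 1)
    (hΛ : Λ.Nonempty) {K : ℝ} (hc_meas : ∀ x i, Measurable (c x i))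
    (hc_bdd : ∀ x i η, |c x i η| ≤ K) (hc_one : ∀ x i η, 1 ≤ c x i η) {g : Config d → ℝ}
    (hg : g ∈ dependsOnSubmodule (interiorF Λ)) (p : Fin d → ℝ) :
    1 / 2 * ∑ i, p i ^ 2 ≤ dirichletEnergy ρ μ c Λ (affineFn (plusF Λ) p + g) := by
  have : IsProbabilityMeasure μ := hμ.1
  have hρ' : ρ ∈ Set.Icc 0 1 := Set.Ioo_subset_Icc_self hρ
  have hℓ := affineFn_mem_dependsOnSubmodule (plusF Λ) p
  have hg' : g ∈ dependsOnSubmodule (plusF Λ) :=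
    dependsOnSubmodule_mono (Finset.coe_subset.2 (interiorF_subset.trans subset_plusF)) hg
  have hpyth := dirichletEnergy_add_smul (ρ := ρ) (μ := μ) (Λ := Λ) (c := fun _ _ _ => 1) (K := 1)
    (fun _ _ => measurable_const) (fun _ _ _ => by norm_num) hℓ hg' 1
  rw [one_smul, dirichletForm_one_affineFn_eq_zero hμ hρ' hg, dirichletEnergy_one_affineFn hμ hρ hΛ]
    at hpyth
  calc 1 / 2 * ∑ i, p i ^ 2
      ≤ dirichletEnergy ρ μ (fun _ _ _ => 1) Λ (affineFn (plusF Λ) p + g) := by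
        rw [hpyth]
        nlinarith [dirichletEnergy_nonneg (μ := μ) (Λ := Λ) hρ' (fun _ _ _ => zero_le_one) g]
    _ ≤ dirichletEnergy ρ μ c Λ (affineFn (plusF Λ) p + g) :=
        dirichletEnergy_one_le hρ' hc_meas hc_bdd hc_one (Submodule.add_mem _ hℓ hg')

lemma dirichletEnergy_affineFn_le (hμ : IsBernoulliProduct ρ μ) (hρ : ρ ∈ Set.Ioo 0 1)
    (hΛ : Λ.Nonempty) {K : ℝ} (hc_nonneg : ∀ x i η, 0 ≤ c x i η) (hc_le : ∀ x i η, c x i η ≤ K)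
    (p : Fin d → ℝ) :
    dirichletEnergy ρ μ c Λ (affineFn (plusF Λ) p) ≤ K / 2 * ∑ i, p i ^ 2 := by
  have : IsProbabilityMeasure μ := hμ.1
  calc dirichletEnergy ρ μ c Λ (affineFn (plusF Λ) p)
      ≤ K * dirichletEnergy ρ μ (fun _ _ _ => 1) Λ (affineFn (plusF Λ) p) :=
        dirichletEnergy_le_mul_one (Set.Ioo_subset_Icc_self hρ) hc_nonneg hc_le
          (affineFn_mem_dependsOnSubmodule _ p)
    _ = K / 2 * ∑ i, p i ^ 2 := by
        rw [dirichletEnergy_one_affineFn hμ hρ hΛ]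
        ring

end Energy

section Nubar

variable {ρ : ℝ} {μ : Measure (Config d)} {c : (Fin d → ℤ) → Fin d → Config d → ℝ}
  {Λ : Finset (Fin d → ℤ)}

lemma nubar_eq_cosetInf : nubar ρ μ c Λ
    = cosetInf (dirichletEnergy ρ μ c Λ) (affineFnₗ (plusF Λ)) (dependsOnSubmodule (interiorF Λ)) :=
  rfl

lemma le_nubar (hμ : IsBernoulliProduct ρ μ) (hρ : ρ ∈ Set.Ioo 0 1) (hΛ : Λ.Nonempty) {K : ℝ}
    (hc_meas : ∀ x i, Measurable (c x i)) (hc_bdd : ∀ x i η, |c x i η| ≤ K)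
    (hc_one : ∀ x i η, 1 ≤ c x i η) (p : Fin d → ℝ) :
    1 / 2 * ∑ i, p i ^ 2 ≤ nubar ρ μ c Λ p :=
  nubar_eq_cosetInf ▸ le_cosetInf fun _ hg =>
    le_dirichletEnergy_affineFn_add hμ hρ hΛ hc_meas hc_bdd hc_one hg p

lemma nubar_le (hμ : IsBernoulliProduct ρ μ) (hρ : ρ ∈ Set.Ioo 0 1) (hΛ : Λ.Nonempty) {K : ℝ}
    (hc_nonneg : ∀ x i η, 0 ≤ c x i η) (hc_le : ∀ x i η, c x i η ≤ K) (p : Fin d → ℝ) :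
    nubar ρ μ c Λ p ≤ K / 2 * ∑ i, p i ^ 2 := by
  rw [nubar_eq_cosetInf]
  refine (cosetInf_le (dirichletEnergy_nonneg (Set.Ioo_subset_Icc_self hρ) hc_nonneg) p
    (Submodule.zero_mem _)).trans ?_
  rw [add_zero, affineFnₗ_apply]
  exact dirichletEnergy_affineFn_le hμ hρ hΛ hc_nonneg hc_le p

lemma nubar_parallelogram [IsFiniteMeasure μ] (hρ : ρ ∈ Set.Icc 0 1) {K : ℝ}
    (hc_meas : ∀ x i, Measurable (c x i)) (hc_nonneg : ∀ x i η, 0 ≤ c x i η)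
    (hc_bdd : ∀ x i η, |c x i η| ≤ K) (p q : Fin d → ℝ) :
    nubar ρ μ c Λ (p + q) + nubar ρ μ c Λ (p - q) = 2 * nubar ρ μ c Λ p + 2 * nubar ρ μ c Λ q :=
  nubar_eq_cosetInf ▸ cosetInf_parallelogram (dirichletEnergy_nonneg hρ hc_nonneg)
    dirichletEnergy_smul (affineFn_mem_dependsOnSubmodule (plusF Λ))
    (dependsOnSubmodule_mono (Finset.coe_subset.2 (interiorF_subset.trans subset_plusF)))
    (fun _ hv _ hw => dirichletEnergy_parallelogram hc_meas hc_bdd hv hw) p q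

end Nubar

end

theorem nubar_quadratic_form_general {d : ℕ} (ρ lam : ℝ) (hρ : ρ ∈ Set.Ioo (0 : ℝ) 1)
    (μ : Measure ((Fin d → ℤ) → Bool)) (hμ : IsBernoulliProduct ρ μ)
    (c : (Fin d → ℤ) → Fin d → ((Fin d → ℤ) → Bool) → ℝ)
    (hc_meas : ∀ x i, Measurable (c x i))
    (hc_bdd : ∀ x i η, 1 ≤ c x i η ∧ c x i η ≤ lam)
    (Λ : Finset (Fin d → ℤ)) (hΛ : Λ.Nonempty) :
    ∃ D : Fin d → Fin d → ℝ,
      (∀ i j, D i j = D j i) ∧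
      (∀ p : Fin d → ℝ, ∑ i, p i ^ 2 ≤ ∑ i, p i * ∑ j, D i j * p j) ∧
      (∀ p : Fin d → ℝ, (∑ i, p i * ∑ j, D i j * p j) ≤ lam * ∑ i, p i ^ 2) ∧
      ∀ p : Fin d → ℝ, nubar ρ μ c Λ p = (1 / 2) * ∑ i, p i * ∑ j, D i j * p j := by
  have : IsProbabilityMeasure μ := hμ.1
  have hc_one : ∀ x i η, 1 ≤ c x i η := fun x i η => (hc_bdd x i η).1
  have hc_le : ∀ x i η, c x i η ≤ lam := fun x i η => (hc_bdd x i η).2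
  have hc_nonneg : ∀ x i η, 0 ≤ c x i η := fun x i η => zero_le_one.trans (hc_one x i η)
  have hc_abs : ∀ x i η, |c x i η| ≤ lam := fun x i η =>
    abs_le.2 ⟨by linarith [hc_one x i η, hc_le x i η], hc_le x i η⟩
  have hlower := le_nubar hμ hρ hΛ hc_meas hc_abs hc_one
  have hupper := nubar_le hμ hρ hΛ hc_nonneg hc_le
  have hpar := nubar_parallelogram (μ := μ) (Λ := Λ) (Set.Ioo_subset_Icc_self hρ) hc_meas
    hc_nonneg hc_abs
  have hsq : ∀ p : Fin d → ℝ, 0 ≤ ∑ i, p i ^ 2 := fun p => by positivity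
  obtain ⟨D, hD_symm, hD⟩ := exists_symm_matrix_of_parallelogram
    (ν := fun p => 2 * nubar ρ μ c Λ p) (fun p q => by linarith [hpar p q])
    (fun p => by linarith [hlower p, hsq p]) (K := lam)
    fun p => by linarith [hupper p]
  refine ⟨D, hD_symm, fun p => ?_, fun p => ?_, fun p => ?_⟩ <;> linarith [hD p, hlower p, hupper p]

/-- Proposition 4.1 (2): `ν̄(ρ,Λ,·)` is a quadratic form: there is a symmetric positive
matrix `D̄(ρ,Λ)` with `Id ≤ D̄(ρ,Λ) ≤ λ·Id` such that `ν̄(ρ,Λ,p) = (1/2) p·D̄(ρ,Λ)p`. -/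
theorem nubar_quadratic_form {d : ℕ} (ρ lam : ℝ) (hρ : ρ ∈ Set.Ioo (0 : ℝ) 1)
    (hlam : 1 ≤ lam)
    (μ : Measure ((Fin d → ℤ) → Bool)) (hμ : IsBernoulliProduct ρ μ)
    (c : (Fin d → ℤ) → Fin d → ((Fin d → ℤ) → Bool) → ℝ)
    (hc_meas : ∀ x i, Measurable (c x i))
    (hc_bdd : ∀ x i η, 1 ≤ c x i η ∧ c x i η ≤ lam)
    (Λ : Finset (Fin d → ℤ)) (hΛ : Λ.Nonempty) :
    ∃ D : Fin d → Fin d → ℝ,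
      (∀ i j, D i j = D j i) ∧
      (∀ p : Fin d → ℝ, ∑ i, p i ^ 2 ≤ ∑ i, p i * ∑ j, D i j * p j) ∧
      (∀ p : Fin d → ℝ, (∑ i, p i * ∑ j, D i j * p j) ≤ lam * ∑ i, p i ^ 2) ∧
      ∀ p : Fin d → ℝ, nubar ρ μ c Λ p = (1 / 2) * ∑ i, p i * ∑ j, D i j * p j :=
  nubar_quadratic_form_general ρ lam hρ μ hμ c hc_meas hc_bdd Λ hΛ
end
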